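/- arXiv:1212.3970 — 6 statements merged into one kernel-verified Lean document; each statement's English description precedes it below -/
import Mathlib

section
/- Let r ∈ {1, 2, 3} and l ≥ r, and let a₁, …, a_r ∈ ℤˡ be vectors all of whose entries are 0 or 1. If the reductions of a₁, …, a_r modulo 2 are linearly independent over the field 𝔽₂ = ℤ/2ℤ, then a₁, …, a_r form part of a basis of ℤˡ, i.e., there exists a ℤ-basis of ℤˡ containing a₁, …, a_r. -/
/-!
Over `𝔽₂` the rows of the reduced matrix are independent, so some `r` of its columns form an
invertible minor. The matching integer minor is a `0/1` matrix of odd determinant; for `r ≤ 3`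
such a determinant has absolute value at most `2`, hence equals `±1`. Completing the `aᵢ` by the
standard basis vectors of the remaining coordinates gives a square integer matrix with the same
determinant, so its rows form a `ℤ`-basis.
-/

open Matrix

theorem Matrix.exists_isUnit_submatrix_of_linearIndependent_row {K m n : Type*} [Field K]
    [Fintype m] [DecidableEq m] [Fintype n] (B : Matrix m n K) (hB : LinearIndependent K B.row) :
    ∃ g : m → n, Function.Injective g ∧ IsUnit (B.submatrix id g) := by
  obtain ⟨κ, c, hc, hspan, hli⟩ := exists_linearIndependent' K B.col
  have hcols : Submodule.span K (Set.range B.col) = ⊤ :=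
    Submodule.eq_top_of_finrank_eq <| by
      rw [← rank_eq_finrank_span_cols, hB.rank_matrix, Module.finrank_fintype_fun_eq_card]
  have : Finite κ := Finite.of_injective c hc
  have : Fintype κ := Fintype.ofFinite κ
  let e : κ ≃ m := (Module.Basis.mk hli (by rw [hspan, hcols])).indexEquiv (Pi.basisFun K m)
  refine ⟨c ∘ e.symm, hc.comp e.symm.injective, ?_⟩
  rw [← linearIndependent_cols_iff_isUnit]
  exact hli.comp e.symm e.symm.injective

section BasisExtension

variable {R ι κ : Type*} [CommRing R] [Fintype ι] [DecidableEq ι] [Fintype κ] [DecidableEq κ]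
  {a : κ → ι → R} {g : κ → ι}

theorem Matrix.det_of_extend_pi_single (hg : Function.Injective g) :
    (of (Function.extend g a fun j => Pi.single j 1)).det = (of fun k k' => a k (g k')).det := by
  set M := of (Function.extend g a fun j => Pi.single j 1)
  have hM : ∀ i, i ∉ Set.range g → M i = Pi.single i 1 := fun i hi =>
    Function.extend_apply' a (fun j => Pi.single j 1) i fun ⟨k, hk⟩ => hi ⟨k, hk⟩
  rw [M.twoBlockTriangular_det (· ∈ Set.range g)]
  · have hcompl : toSquareBlockProp M (· ∉ Set.range g) = 1 := by
      ext ⟨i, hi⟩ ⟨j, hj⟩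
      simp [toSquareBlockProp_def, hM i hi, Pi.single_apply, one_apply, eq_comm]
    let e : κ ≃ Set.range g := Equiv.ofInjective g hg
    have hrange : toSquareBlockProp M (· ∈ Set.range g) =
        (of fun k k' => a k (g k')).submatrix e.symm e.symm := by
      ext i j
      obtain ⟨k, rfl⟩ := e.surjective i
      obtain ⟨k', rfl⟩ := e.surjective j
      simp [toSquareBlockProp_def, M, e, hg.extend_apply]
    rw [hcompl, hrange, det_one, mul_one]
    convert det_submatrix_equiv_self e.symm (of fun k k' => a k (g k'))
  · intro i hi j hj
    rw [show M i j = _ from congrFun (hM i hi) j, Pi.single_apply, if_neg]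
    rintro rfl
    exact hi hj

theorem exists_basis_extend_of_isUnit_det (hg : Function.Injective g)
    (h : IsUnit (of fun k k' => a k (g k')).det) :
    ∃ b : Module.Basis ι R (ι → R), ∀ k, b (g k) = a k := by
  rw [← det_of_extend_pi_single hg, ← Pi.basisFun_det_apply, ← Module.Basis.is_basis_iff_det] at h
  exact ⟨Module.Basis.mk h.1 h.2.ge, fun k => by rw [Module.Basis.mk_apply, hg.extend_apply]⟩

end BasisExtension

-- Fails for `r = 4`: the all-ones matrix minus the identity has determinant `-3`.
theorem Matrix.abs_det_le_two_of_zero_one {r : ℕ} (A : Matrix (Fin r) (Fin r) ℤ) (hr : r ≤ 3)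
    (hA : ∀ i j, A i j = 0 ∨ A i j = 1) : |A.det| ≤ 2 := by
  rw [abs_le]
  interval_cases r
  · simp
  · rw [det_fin_one]
    rcases hA 0 0 with h | h <;> rw [h] <;> norm_num
  · rw [det_fin_two]
    rcases hA 0 0 with h00 | h00 <;> rcases hA 0 1 with h01 | h01 <;>
      rcases hA 1 0 with h10 | h10 <;> rcases hA 1 1 with h11 | h11 <;>
      rw [h00, h01, h10, h11] <;> norm_num
  · rw [det_fin_three]
    rcases hA 0 0 with h00 | h00 <;> rcases hA 0 1 with h01 | h01 <;>
      rcases hA 0 2 with h02 | h02 <;> rcases hA 1 0 with h10 | h10 <;>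
      rcases hA 1 1 with h11 | h11 <;> rcases hA 1 2 with h12 | h12 <;>
      rcases hA 2 0 with h20 | h20 <;> rcases hA 2 1 with h21 | h21 <;>
      rcases hA 2 2 with h22 | h22 <;>
      rw [h00, h01, h02, h10, h11, h12, h20, h21, h22] <;> norm_num

theorem Matrix.isUnit_det_of_zero_one {r : ℕ} (A : Matrix (Fin r) (Fin r) ℤ) (hr : r ≤ 3)
    (hA : ∀ i j, A i j = 0 ∨ A i j = 1) (h2 : IsUnit (A.map (Int.cast : ℤ → ZMod 2)).det) :
    IsUnit A.det := by
  have hodd : ¬ ((2 : ℕ) : ℤ) ∣ A.det := by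
    rw [← ZMod.intCast_zmod_eq_zero_iff_dvd, Int.cast_det]
    exact h2.ne_zero
  have hbound := abs_le.mp (A.abs_det_le_two_of_zero_one hr hA)
  rw [Int.isUnit_iff]
  omega

theorem stmt_2_general (r l : ℕ) (hr : r = 1 ∨ r = 2 ∨ r = 3)
    (a : Fin r → (Fin l → ℤ)) (h01 : ∀ i j, a i j = 0 ∨ a i j = 1)
    (hind : LinearIndependent (ZMod 2) (fun i : Fin r => fun j : Fin l => ((a i j : ZMod 2)))) :
    ∃ (b : Module.Basis (Fin l) ℤ (Fin l → ℤ)) (f : Fin r → Fin l),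
      Function.Injective f ∧ ∀ i, b (f i) = a i := by
  obtain ⟨g, hg, hunit⟩ :=
    (of fun i j => (a i j : ZMod 2)).exists_isUnit_submatrix_of_linearIndependent_row hind
  have hdet : IsUnit (of fun k k' => a k (g k')).det :=
    isUnit_det_of_zero_one _ (by omega) (fun i j => h01 i (g j))
      ((isUnit_iff_isUnit_det _).mp hunit)
  obtain ⟨b, hb⟩ := exists_basis_extend_of_isUnit_det hg hdet
  exact ⟨b, g, hg, hb⟩

/-- For `r ∈ {1,2,3}` and `l ≥ r`: if `a₁,…,a_r ∈ ℤˡ` are `0/1`-vectors whose reductions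
mod `2` are linearly independent over `𝔽₂`, then `a₁,…,a_r` form part of a `ℤ`-basis of `ℤˡ`. -/
theorem stmt_2 (r l : ℕ) (hr : r = 1 ∨ r = 2 ∨ r = 3) (hl : r ≤ l)
    (a : Fin r → (Fin l → ℤ)) (h01 : ∀ i j, a i j = 0 ∨ a i j = 1)
    (hind : LinearIndependent (ZMod 2) (fun i : Fin r => fun j : Fin l => ((a i j : ZMod 2)))) :
    ∃ (b : Module.Basis (Fin l) ℤ (Fin l → ℤ)) (f : Fin r → Fin l),
      Function.Injective f ∧ ∀ i, b (f i) = a i :=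
  stmt_2_general r l hr a h01 hind
end

section
/- For every n×k integer matrix B, the columns of B form part of a basis of ℤⁿ (i.e., there exists a ℤ-basis of ℤⁿ containing all k columns of B) if and only if the n rows of B generate ℤᵏ as an abelian group. -/
/-!
Both conditions say that `B` has an integral left inverse `C`, i.e. `C * B = 1`. The rows of `B`
span `ℤᵏ` iff `v ↦ v ᵥ* B` is surjective, iff such a `C` exists. If the columns of `B` are members
`b (f j)` of a basis `b`, the coordinate functionals `b.coord (f j)` are the rows of such a `C`.
Conversely, `C * B = 1` splits `ℤⁿ = range B ⊕ ker C`; the kernel is free because `ℤ` is a PID,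
so the columns of `B` together with a basis of `ker C` form a basis of `ℤⁿ`.
-/

open Module LinearMap

section Retraction

variable {R M N : Type*} [Ring R] [AddCommGroup M] [Module R M] [AddCommGroup N] [Module R N]
  {s : N →ₗ[R] M} {r : M →ₗ[R] N}

theorem LinearMap.isCompl_range_ker_of_comp_eq_id (h : r ∘ₗ s = LinearMap.id) :
    IsCompl (range s) (ker r) := by
  have hrs (y : N) : r (s y) = y := congr($h y)
  constructor
  · rw [Submodule.disjoint_def]
    rintro _ ⟨y, rfl⟩ hy
    rw [mem_ker, hrs] at hy
    simp [hy]
  · rw [codisjoint_iff_le_sup]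
    intro x _
    exact Submodule.mem_sup.2
      ⟨s (r x), ⟨r x, rfl⟩, x - s (r x), by simp [hrs], add_sub_cancel _ _⟩

theorem Module.Basis.exists_sum_inl_eq_of_comp_eq_id {ι κ : Type*} (h : r ∘ₗ s = LinearMap.id)
    (bN : Basis ι R N) (bK : Basis κ R (ker r)) :
    ∃ b : Basis (ι ⊕ κ) R M, ∀ i, b (.inl i) = s (bN i) := by
  let eN : N ≃ₗ[R] range s := LinearEquiv.ofLeftInverse (g := r) fun y => congr($h y)
  let e := Submodule.prodEquivOfIsCompl _ _ (isCompl_range_ker_of_comp_eq_id h)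
  exact ⟨((bN.map eN).prod bK).map e, fun i => by simp [e, eN]⟩

end Retraction

namespace Matrix

variable {R m n : Type*} [Fintype m] [Fintype n] [DecidableEq n]

theorem exists_mul_eq_one_of_basis_extends_cols [CommSemiring R] [DecidableEq m]
    {B : Matrix m n R} (b : Basis m R (m → R)) {f : n → m} (hf : Function.Injective f)
    (hb : ∀ j, b (f j) = B.col j) : ∃ C : Matrix n m R, C * B = 1 := by
  let L := Finsupp.lcoeFun ∘ₗ Finsupp.lcomapDomain f hf ∘ₗ b.repr.toLinearMap
  refine ⟨toMatrix' L, ?_⟩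
  rw [← toMatrix'_toLin' B, ← toMatrix'_comp, ← toMatrix'_id]
  congr 1
  refine pi_ext' fun j => LinearMap.ext_ring ?_
  ext j'
  simp [L, ← hb, Finsupp.single_apply, Pi.single_apply, eq_comm]

theorem exists_basis_extends_cols_of_mul_eq_one [CommRing R] [IsDomain R] [IsPrincipalIdealRing R]
    {B : Matrix m n R} {C : Matrix n m R} (h : C * B = 1) :
    ∃ (b : Basis m R (m → R)) (f : n → m), Function.Injective f ∧ ∀ j, b (f j) = B.col j := by
  have hCB : C.mulVecLin ∘ₗ B.mulVecLin = LinearMap.id := by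
    rw [← mulVecLin_mul, h, mulVecLin_one]
  obtain ⟨b, hb⟩ := (Pi.basisFun R n).exists_sum_inl_eq_of_comp_eq_id hCB
    (Free.chooseBasis R (ker C.mulVecLin))
  let e := b.indexEquiv (Pi.basisFun R m)
  refine ⟨b.reindex e, e ∘ .inl, e.injective.comp Sum.inl_injective, fun j => ?_⟩
  simp [hb]

theorem exists_basis_extends_cols_iff_exists_mul_eq_one [CommRing R] [IsDomain R]
    [IsPrincipalIdealRing R] [DecidableEq m] {B : Matrix m n R} :
    (∃ (b : Basis m R (m → R)) (f : n → m), Function.Injective f ∧ ∀ j, b (f j) = B.col j) ↔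
      ∃ C : Matrix n m R, C * B = 1 :=
  ⟨fun ⟨b, _, hf, hb⟩ => exists_mul_eq_one_of_basis_extends_cols b hf hb,
    fun ⟨_, h⟩ => exists_basis_extends_cols_of_mul_eq_one h⟩

end Matrix

/-- For an `n×k` integer matrix `B`, the columns of `B` form part of a `ℤ`-basis of `ℤⁿ`
iff the rows of `B` generate `ℤᵏ` as an abelian group. -/
theorem stmt_3 (n k : ℕ) (B : Matrix (Fin n) (Fin k) ℤ) :
    (∃ (b : Module.Basis (Fin n) ℤ (Fin n → ℤ)) (f : Fin k → Fin n),
        Function.Injective f ∧ ∀ j, b (f j) = fun i => B i j) ↔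
      Submodule.span ℤ (Set.range fun i : Fin n => (B i : Fin k → ℤ)) = ⊤ := by
  rw [show (Set.range fun i => B i) = Set.range B.row from rfl, ← range_vecMulLinear,
    range_eq_top, Matrix.coe_vecMulLinear, Matrix.vecMul_surjective_iff_exists_left_inverse]
  exact Matrix.exists_basis_extends_cols_iff_exists_mul_eq_one
end

section
/- For r ∈ {1, 2, 3}: there exists an m×r integer matrix satisfying condition (A) for K if and only if there exists an m×r matrix over 𝔽₂ satisfying condition (A2) for K. Equivalently, s(K) ≥ r if and only if s_ℝ(K) ≥ r. -/
/-- `K` is an abstract simplicial complex on the vertex set `[m]`: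
it contains the empty set and is closed under taking subsets. -/
def IsSimplicialComplex (m : ℕ) (K : Set (Finset (Fin m))) : Prop :=
  ∅ ∈ K ∧ ∀ σ ∈ K, ∀ τ ⊆ σ, τ ∈ K

/-- `ω` is a minimal non-simplex of `K`: `ω ∉ K` but every proper subset of `ω` is in `K`. -/
def MinimalNonSimplex (m : ℕ) (K : Set (Finset (Fin m))) (ω : Finset (Fin m)) : Prop :=
  ω ∉ K ∧ ∀ τ ⊂ ω, τ ∈ K

/-- Condition (A): for every simplex `σ ∈ K` the rows `{Sⁱ : i ∉ σ}`
generate `ℤᵏ` as an abelian group. -/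
def CondA (m k : ℕ) (K : Set (Finset (Fin m))) (S : Matrix (Fin m) (Fin k) ℤ) : Prop :=
  ∀ σ ∈ K, Submodule.span ℤ ((fun i => S i) '' {i : Fin m | i ∉ σ}) = ⊤

/-- Condition (A2): for every simplex `σ ∈ K` the rows `{Sⁱ : i ∉ σ}` span `𝔽₂ᵏ`. -/
def CondA2 (m k : ℕ) (K : Set (Finset (Fin m))) (S : Matrix (Fin m) (Fin k) (ZMod 2)) : Prop :=
  ∀ σ ∈ K, Submodule.span (ZMod 2) ((fun i => S i) '' {i : Fin m | i ∉ σ}) = ⊤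

/-!
Reducing an integer matrix mod 2 preserves the spanning condition, since `ℤ → 𝔽₂` is surjective.
Conversely, lift an `𝔽₂`-matrix to its `0/1` representative. Whenever the rows outside a simplex
span `𝔽₂ʳ`, some `r` of them form an invertible matrix over `𝔽₂`, so the corresponding `0/1`
integer matrix has odd determinant. A `0/1` matrix of size at most `3` has determinant of absolute
value at most `2`, hence this determinant is `±1` and these `r` integer rows already generate `ℤʳ`.
-/

open Submodule Matrix

theorem span_image_comp_eq_top_of_surjective {R S κ : Type*} [CommRing R] [CommRing S]
    (f : R →+* S) (hf : Function.Surjective f) (X : Set (κ → R)) (hX : span R X = ⊤) :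
    span S ((fun x => f ∘ x) '' X) = ⊤ := by
  rw [eq_top_iff]
  rintro y -
  obtain ⟨x, rfl⟩ : ∃ x : κ → R, f ∘ x = y :=
    ⟨fun j => (hf (y j)).choose, funext fun j => (hf (y j)).choose_spec⟩
  have hx : x ∈ span R X := hX ▸ mem_top
  induction hx using span_induction with
  | mem x hx => exact subset_span ⟨x, hx, rfl⟩
  | zero => rw [show f ∘ (0 : κ → R) = 0 by ext; simp]; exact zero_mem _
  | add x y _ _ hx hy => convert add_mem hx hy; ext; simp
  | smul c x _ hx => convert smul_mem _ (f c) hx; ext; simp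

theorem exists_isUnit_of_span_image_eq_top {K ι n : Type*} [Field K] [Fintype n] [DecidableEq n]
    (v : ι → n → K) (s : Set ι) (h : span K (v '' s) = ⊤) :
    ∃ e : n → ι, (∀ p, e p ∈ s) ∧ IsUnit (Matrix.of fun p => v (e p)) := by
  obtain ⟨b, hbs, hbspan, hbli⟩ := exists_linearIndependent K (v '' s)
  have := hbli.finite
  have : Fintype b := .ofFinite b
  have hcard : Fintype.card n = Fintype.card b := by
    have := finrank_span_eq_card hbli
    rwa [Subtype.range_coe, hbspan, h, finrank_top, Module.finrank_fintype_fun_eq_card] at this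
  let e : n ≃ b := Fintype.equivOfCardEq hcard
  choose idx hidx using fun p => hbs (e p).2
  refine ⟨idx, fun p => (hidx p).1, linearIndependent_rows_iff_isUnit.1 ?_⟩
  have hrows : (Matrix.of fun p => v (idx p)).row = Subtype.val ∘ e :=
    funext fun p => (hidx p).2
  rw [hrows]
  exact hbli.comp e e.injective

theorem span_range_eq_top_of_isUnit {R n : Type*} [CommRing R] [Fintype n] [DecidableEq n]
    {B : Matrix n n R} (hB : IsUnit B) : span R (Set.range B.row) = ⊤ := by
  rw [← range_vecMulLinear, LinearMap.range_eq_top]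
  exact vecMul_surjective_iff_isUnit.2 hB

/-- False for `n = 4`, where a `0/1` matrix can have determinant `3`. -/
theorem abs_det_map_val_le_two {n : ℕ} (hn : n ≤ 3) (M : Matrix (Fin n) (Fin n) (ZMod 2)) :
    |(M.map fun x => (x.val : ℤ)).det| ≤ 2 := by
  interval_cases n
  · simp
  · have key : ∀ a : ZMod 2, |(a.val : ℤ)| ≤ 2 := by decide
    simpa only [det_fin_one, map_apply] using key (M 0 0)
  · have key : ∀ a b c d : ZMod 2, |(a.val : ℤ) * d.val - b.val * c.val| ≤ 2 := by decide
    simpa only [det_fin_two, map_apply] using key (M 0 0) (M 0 1) (M 1 0) (M 1 1)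
  · have key : ∀ a b c d e f g h i : ZMod 2,
        |(a.val : ℤ) * e.val * i.val - a.val * f.val * h.val - b.val * d.val * i.val
          + b.val * f.val * g.val + c.val * d.val * h.val - c.val * e.val * g.val| ≤ 2 := by
      decide
    simpa only [det_fin_three, map_apply] using
      key (M 0 0) (M 0 1) (M 0 2) (M 1 0) (M 1 1) (M 1 2) (M 2 0) (M 2 1) (M 2 2)

theorem isUnit_map_val_of_isUnit {n : ℕ} (hn : n ≤ 3) {M : Matrix (Fin n) (Fin n) (ZMod 2)}
    (hM : IsUnit M) : IsUnit (M.map fun x => (x.val : ℤ)) := by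
  set L := M.map fun x => (x.val : ℤ)
  have hred : L.map (Int.castRingHom (ZMod 2)) = M := by ext; simp [L]
  have hodd : ¬ 2 ∣ L.det := by
    intro h2
    have := (isUnit_iff_isUnit_det M).1 hM
    rw [← hred, ← RingHom.mapMatrix_apply, ← RingHom.map_det] at this
    exact this.ne_zero ((ZMod.intCast_zmod_eq_zero_iff_dvd _ 2).2 h2)
  have hbound : -2 ≤ L.det ∧ L.det ≤ 2 := abs_le.1 (abs_det_map_val_le_two hn M)
  rw [isUnit_iff_isUnit_det, Int.isUnit_iff]
  omega

theorem span_image_val_eq_top {ι : Type*} {n : ℕ} (hn : n ≤ 3) (v : ι → Fin n → ZMod 2)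
    (s : Set ι) (h : span (ZMod 2) (v '' s) = ⊤) :
    span ℤ ((fun i j => ((v i j).val : ℤ)) '' s) = ⊤ := by
  obtain ⟨e, hes, hunit⟩ := exists_isUnit_of_span_image_eq_top v s h
  rw [eq_top_iff, ← span_range_eq_top_of_isUnit (isUnit_map_val_of_isUnit hn hunit)]
  apply span_mono
  rintro _ ⟨p, rfl⟩
  exact ⟨e p, hes p, rfl⟩

theorem stmt_4_general (m : ℕ) (K : Set (Finset (Fin m)))
    (r : ℕ) (hr : r = 1 ∨ r = 2 ∨ r = 3) :
    (∃ S : Matrix (Fin m) (Fin r) ℤ, CondA m r K S) ↔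
      (∃ S : Matrix (Fin m) (Fin r) (ZMod 2), CondA2 m r K S) := by
  constructor
  · rintro ⟨S, hS⟩
    refine ⟨S.map (Int.castRingHom (ZMod 2)), fun σ hσ => ?_⟩
    have := span_image_comp_eq_top_of_surjective _
      (ZMod.ringHom_surjective (Int.castRingHom (ZMod 2))) _ (hS σ hσ)
    rwa [Set.image_image] at this
  · rintro ⟨S, hS⟩
    exact ⟨S.map fun x => (x.val : ℤ), fun σ hσ =>
      span_image_val_eq_top (by omega) (fun i => S i) _ (hS σ hσ)⟩

/-- For `r ∈ {1,2,3}`: `s(K) ≥ r` iff `s_ℝ(K) ≥ r`, i.e. an `m×r` integer matrix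
satisfying (A) exists iff an `m×r` matrix over `𝔽₂` satisfying (A2) exists. -/
theorem stmt_4 (m : ℕ) (K : Set (Finset (Fin m))) (hK : IsSimplicialComplex m K)
    (r : ℕ) (hr : r = 1 ∨ r = 2 ∨ r = 3) :
    (∃ S : Matrix (Fin m) (Fin r) ℤ, CondA m r K S) ↔
      (∃ S : Matrix (Fin m) (Fin r) (ZMod 2), CondA2 m r K S) :=
  stmt_4_general m K r hr
end

section
/- Let S be an m×k integer matrix with rows S¹,…,Sᵐ ∈ ℤᵏ. Then S satisfies condition (A) for K if and only if the following condition (A*) holds: for every prime p and every nonzero vector a ∈ (ℤ/pℤ)ᵏ there exists a minimal non-simplex ω(a) ∈ N(K) such that ⟨a, Sⁱ mod p⟩ ≠ 0 in ℤ/pℤ for every i ∈ ω(a), where ⟨·,·⟩ denotes the standard bilinear form on (ℤ/pℤ)ᵏ and Sⁱ mod p is the coordinatewise reduction of Sⁱ. -/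
/-!
A proper submodule of a finitely generated abelian group lies in a maximal one, whose quotient is
simple, hence isomorphic to `ℤ/p` for a prime `p`. So the rows `{Sⁱ : i ∉ σ}` generate `ℤᵏ` iff
no nonzero homomorphism `ℤᵏ → ℤ/p` kills all of them, and every such homomorphism is
`v ↦ ⟨a, v mod p⟩` for a unique `a ≠ 0`. For fixed `a`, the support `{i | ⟨a, Sⁱ⟩ ≠ 0}` meets the
complement of every simplex iff it is not a simplex, iff it contains a minimal non-simplex.
-/

theorem Ideal.exists_prime_eq_span_of_isMaximal_int {I : Ideal ℤ} (hI : I.IsMaximal) :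
    ∃ p : ℕ, p.Prime ∧ I = Ideal.span {(p : ℤ)} :=
  (Ideal.isPrime_int_iff.mp hI.isPrime).resolve_left
    (Ring.ne_bot_of_isMaximal_of_not_isField hI Int.not_isField)

theorem Submodule.exists_zmod_linearMap_ne_zero_le_ker {V : Type*} [AddCommGroup V]
    [Module.Finite ℤ V] {M : Submodule ℤ V} (hM : M ≠ ⊤) :
    ∃ p : ℕ, p.Prime ∧ ∃ f : V →ₗ[ℤ] ZMod p, f ≠ 0 ∧ M ≤ LinearMap.ker f := by
  obtain ⟨N, hN, hMN⟩ := (eq_top_or_exists_le_coatom M).resolve_left hM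
  have hsimple : IsSimpleModule ℤ (V ⧸ N) := isSimpleModule_iff_isCoatom.mpr hN
  obtain ⟨I, hI, ⟨e⟩⟩ := isSimpleModule_iff_quot_maximal.mp hsimple
  obtain ⟨p, hp, rfl⟩ := Ideal.exists_prime_eq_span_of_isMaximal_int hI
  let f : V →ₗ[ℤ] ZMod p :=
    ((e.trans (Int.quotientSpanNatEquivZMod p).toAddEquiv.toIntLinearEquiv) : _ →ₗ[ℤ] _) ∘ₗ N.mkQ
  have hker : LinearMap.ker f = N := by
    simp [f, LinearEquiv.ker_comp]
  refine ⟨p, hp, f, fun hf => hN.1 ?_, hker ▸ hMN⟩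
  rw [← hker, hf, LinearMap.ker_zero]

theorem Submodule.span_eq_top_iff_forall_zmod {V : Type*} [AddCommGroup V] [Module.Finite ℤ V]
    (s : Set V) :
    span ℤ s = ⊤ ↔ ∀ p : ℕ, p.Prime → ∀ f : V →ₗ[ℤ] ZMod p, f ≠ 0 → ∃ v ∈ s, f v ≠ 0 := by
  refine ⟨fun hs p _ f hf => ?_, fun h => ?_⟩
  · by_contra! hvanish
    apply hf
    rw [← LinearMap.ker_eq_top, eq_top_iff, ← hs, span_le]
    exact hvanish
  · by_contra hs
    obtain ⟨p, hp, f, hf, hker⟩ := exists_zmod_linearMap_ne_zero_le_ker hs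
    obtain ⟨v, hv, hfv⟩ := h p hp f hf
    exact hfv (hker (subset_span hv))

theorem Pi.basisFun_constr_apply_eq_sum {ι R : Type*} [Fintype ι] [Ring R] (a : ι → R)
    (v : ι → ℤ) : (Pi.basisFun ℤ ι).constr ℤ a v = ∑ j, a j * v j := by
  simp only [Module.Basis.constr_apply_fintype, Pi.basisFun_equivFun, LinearEquiv.refl_apply,
    zsmul_eq_mul, Int.cast_comm]

theorem exists_minimalNonSimplex_subset {m : ℕ} {K : Set (Finset (Fin m))} (τ : Finset (Fin m))
    (hτ : τ ∉ K) : ∃ ω ⊆ τ, MinimalNonSimplex m K ω := by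
  induction τ using Finset.strongInduction with
  | _ τ ih =>
    by_cases h : ∀ τ' ⊂ τ, τ' ∈ K
    · exact ⟨τ, subset_rfl, hτ, h⟩
    · push Not at h
      obtain ⟨τ', hτ'τ, hτ'⟩ := h
      obtain ⟨ω, hωτ', hω⟩ := ih τ' hτ'τ hτ'
      exact ⟨ω, hωτ'.trans hτ'τ.subset, hω⟩

theorem IsSimplicialComplex.exists_minimalNonSimplex_iff {m : ℕ} {K : Set (Finset (Fin m))}
    (hK : IsSimplicialComplex m K) (P : Fin m → Prop) :
    (∃ ω, MinimalNonSimplex m K ω ∧ ∀ i ∈ ω, P i) ↔ ∀ σ ∈ K, ∃ i ∉ σ, P i := by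
  classical
  constructor
  · rintro ⟨ω, hω, hP⟩ σ hσ
    by_contra! hPσ
    exact hω.1 (hK.2 σ hσ ω fun i hi => by_contra fun hiσ => hPσ i hiσ (hP i hi))
  · intro h
    have hT : Finset.univ.filter P ∉ K := fun hT => by
      obtain ⟨i, hi, hPi⟩ := h _ hT
      exact hi (by simpa using hPi)
    obtain ⟨ω, hωT, hω⟩ := exists_minimalNonSimplex_subset _ hT
    exact ⟨ω, hω, fun i hi => by simpa using hωT hi⟩

/-- Condition (A) is equivalent to condition (A*): for every prime `p` and every nonzero
`a ∈ (ℤ/pℤ)ᵏ` there is a minimal non-simplex `ω(a) ∈ N(K)` with `⟨a, Sⁱ mod p⟩ ≠ 0`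
for all `i ∈ ω(a)`. -/
theorem stmt_7 (m k : ℕ) (K : Set (Finset (Fin m))) (hK : IsSimplicialComplex m K)
    (S : Matrix (Fin m) (Fin k) ℤ) :
    CondA m k K S ↔
      ∀ p : ℕ, p.Prime → ∀ a : Fin k → ZMod p, a ≠ 0 →
        ∃ ω : Finset (Fin m), MinimalNonSimplex m K ω ∧
          ∀ i ∈ ω, (∑ j, a j * ((S i j : ZMod p))) ≠ 0 := by
  have hA : CondA m k K S ↔ ∀ p : ℕ, p.Prime → ∀ f : (Fin k → ℤ) →ₗ[ℤ] ZMod p, f ≠ 0 →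
      ∀ σ ∈ K, ∃ i ∉ σ, f (S i) ≠ 0 := by
    simp only [CondA, Submodule.span_eq_top_iff_forall_zmod, Set.exists_mem_image,
      Set.mem_ofPred_eq]
    exact ⟨fun h p hp f hf σ hσ => h σ hσ p hp f hf, fun h σ hσ p hp f hf => h p hp f hf σ hσ⟩
  simp only [hA, ← hK.exists_minimalNonSimplex_iff]
  refine forall₂_congr fun p _ => ?_
  refine Iff.symm <| ((Pi.basisFun ℤ (Fin k)).constr ℤ).toEquiv.forall_congr fun {a} => ?_
  simp only [ne_eq, LinearEquiv.coe_toEquiv, EmbeddingLike.map_eq_zero_iff,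
    Pi.basisFun_constr_apply_eq_sum]
end

section
/- For every integer k ≥ 0: s_ℝ(K) ≥ k (i.e., there exists an m×k matrix over 𝔽₂ satisfying condition (A2) for K) if and only if there exists a map ξ : 𝔽₂ᵏ ∖ {0} → N(K) such that for every odd integer l = 2r+1 ≥ 3 and all pairwise distinct vectors a₁, …, a_l ∈ 𝔽₂ᵏ ∖ {0} with a₁ + ⋯ + a_l = 0 and such that every proper subset of {a₁, …, a_l} is linearly independent over 𝔽₂ (i.e., the dependence is minimal), one has ξ(a₁) ∩ ⋯ ∩ ξ(a_l) = ∅. -/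
namespace Stmt9Aux

lemma zmod2_cases (x : ZMod 2) : x = 0 ∨ x = 1 := by
  fin_cases x
  · exact Or.inl rfl
  · exact Or.inr rfl

lemma two_eq_zero : (2 : ZMod 2) = 0 := by decide

/-- the dot product with `a`, as a linear map in the first argument -/
def dotMap (k : ℕ) (a : Fin k → ZMod 2) : (Fin k → ZMod 2) →ₗ[ZMod 2] ZMod 2 where
  toFun v := ∑ c, v c * a c
  map_add' x y := by simp [add_mul, Finset.sum_add_distrib]
  map_smul' r x := by simp [Finset.mul_sum, mul_assoc]

lemma dotMap_single (k : ℕ) (a : Fin k → ZMod 2) (c : Fin k) :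
    dotMap k a (Pi.single c 1) = a c := by
  simp [dotMap, Pi.single_apply, Finset.sum_ite_eq']

/-- expansion of a linear functional in the standard basis -/
lemma functional_eq_sum (k : ℕ) (f : (Fin k → ZMod 2) →ₗ[ZMod 2] ZMod 2)
    (v : Fin k → ZMod 2) : f v = ∑ c, v c * f (Pi.single c 1) := by
  conv_lhs => rw [← Finset.univ_sum_single v]
  rw [map_sum]
  refine Finset.sum_congr rfl fun c _ => ?_
  have h1 : Pi.single c (v c) = v c • (Pi.single c 1 : Fin k → ZMod 2) := by
    funext j
    by_cases hj : j = c <;> simp [Pi.single_apply, hj]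
  rw [h1, map_smul, smul_eq_mul]

lemma span_top_of_dot (k : ℕ) (s : Set (Fin k → ZMod 2))
    (h : ∀ a : Fin k → ZMod 2, a ≠ 0 → ∃ v ∈ s, ∑ c, v c * a c ≠ 0) :
    Submodule.span (ZMod 2) s = ⊤ := by
  by_contra hne
  obtain ⟨x, hx⟩ : ∃ x, x ∉ Submodule.span (ZMod 2) s := by
    by_contra hall
    push_neg at hall
    exact hne (Submodule.eq_top_iff'.mpr hall)
  obtain ⟨f, hfx, hmap⟩ := Submodule.exists_dual_map_eq_bot_of_notMem hx inferInstance
  set a : Fin k → ZMod 2 := fun c => f (Pi.single c 1) with ha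
  have hfv : ∀ v, f v = ∑ c, v c * a c := fun v => functional_eq_sum k f v
  have hane : a ≠ 0 := by
    intro h0
    apply hfx
    rw [hfv x, h0]
    simp
  obtain ⟨v, hv, hvd⟩ := h a hane
  apply hvd
  have : f v = 0 := by
    have : f v ∈ Submodule.map f (Submodule.span (ZMod 2) s) :=
      Submodule.mem_map_of_mem (Submodule.subset_span hv)
    rw [hmap] at this
    simpa using this
  rw [hfv] at this
  exact this

lemma dot_of_span_top (k : ℕ) (s : Set (Fin k → ZMod 2))
    (h : Submodule.span (ZMod 2) s = ⊤) (a : Fin k → ZMod 2) (ha : a ≠ 0) :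
    ∃ v ∈ s, ∑ c, v c * a c ≠ 0 := by
  by_contra hall
  push_neg at hall
  have hsub : s ⊆ (LinearMap.ker (dotMap k a) : Set (Fin k → ZMod 2)) := by
    intro v hv
    simpa [dotMap, LinearMap.mem_ker] using hall v hv
  have : Submodule.span (ZMod 2) s ≤ LinearMap.ker (dotMap k a) :=
    Submodule.span_le.mpr hsub
  rw [h, top_le_iff] at this
  apply ha
  funext c
  have : dotMap k a (Pi.single c 1) = 0 := by
    have hm : Pi.single c (1:ZMod 2) ∈ LinearMap.ker (dotMap k a) := by
      rw [this]; trivial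
    exact hm
  rw [dotMap_single] at this
  simpa using this

/-- extraction of a minimal non-simplex from a non-simplex -/
lemma exists_mns (m : ℕ) (K : Set (Finset (Fin m))) (ω : Finset (Fin m)) (hω : ω ∉ K) :
    ∃ τ ⊆ ω, MinimalNonSimplex m K τ := by
  induction ω using Finset.strongInduction with
  | _ ω ih =>
    by_cases h : ∀ τ ⊂ ω, τ ∈ K
    · exact ⟨ω, subset_rfl, hω, h⟩
    · push_neg at h
      obtain ⟨τ, hτs, hτ⟩ := h
      obtain ⟨τ', h1, h2⟩ := ih τ hτs hτ
      exact ⟨τ', h1.trans hτs.subset, h2⟩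

/-- over 𝔽₂, members of a span are sums of finite subsets -/
lemma mem_span_zmod2 {M : Type*} [AddCommGroup M] [Module (ZMod 2) M] {s : Set M} {x : M}
    (hx : x ∈ Submodule.span (ZMod 2) s) : ∃ F : Finset M, ↑F ⊆ s ∧ ∑ v ∈ F, v = x := by
  obtain ⟨c, hc, hsum⟩ := Submodule.mem_span_set.mp hx
  refine ⟨c.support, hc, ?_⟩
  rw [← hsum, Finsupp.sum]
  refine Finset.sum_congr rfl fun v hv => ?_
  have h1 : c v ≠ 0 := Finsupp.mem_support_iff.mp hv
  rcases zmod2_cases (c v) with h | h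
  · exact absurd h h1
  · rw [h, one_smul]

lemma natCast_zmod2_odd {n : ℕ} (h : Odd n) : (n : ZMod 2) = 1 := by
  obtain ⟨r, rfl⟩ := h
  push_cast
  rw [two_eq_zero]
  ring

/-- consistency: if no odd subset of `A` sums to zero, there is a functional ≡ 1 on `A` -/
lemma exists_functional (k : ℕ) (A : Set (Fin k → ZMod 2))
    (h : ∀ F : Finset (Fin k → ZMod 2), ↑F ⊆ A → ∑ v ∈ F, v = 0 → Even F.card) :
    ∃ f : (Fin k → ZMod 2) →ₗ[ZMod 2] ZMod 2, ∀ a ∈ A, f a = 1 := by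
  set A' : Set ((Fin k → ZMod 2) × ZMod 2) := (fun a => (a, 1)) '' A with hA'
  have hnm : ((0 : Fin k → ZMod 2), (1 : ZMod 2)) ∉ Submodule.span (ZMod 2) A' := by
    intro hmem
    obtain ⟨F', hF's, hF'sum⟩ := mem_span_zmod2 hmem
    set F : Finset (Fin k → ZMod 2) := F'.image Prod.fst with hF
    have hsnd : ∀ p ∈ F', p.2 = 1 := by
      intro p hp
      obtain ⟨a, _, rfl⟩ := hF's (Finset.mem_coe.mpr hp)
      rfl
    have hinj : Set.InjOn Prod.fst (↑F' : Set ((Fin k → ZMod 2) × ZMod 2)) := by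
      intro p hp q hq hpq
      have := hsnd p hp
      have := hsnd q hq
      exact Prod.ext hpq (by simp_all)
    have hcard : F.card = F'.card := Finset.card_image_of_injOn hinj
    have hFsub : ↑F ⊆ A := by
      intro v hv
      simp only [hF, Finset.coe_image, Set.mem_image, Finset.mem_coe] at hv
      obtain ⟨p, hp, rfl⟩ := hv
      obtain ⟨a, ha, rfl⟩ := hF's (Finset.mem_coe.mpr hp)
      exact ha
    have hFsum : ∑ v ∈ F, v = 0 := by
      rw [hF, Finset.sum_image (fun p hp q hq => hinj (Finset.mem_coe.mpr hp) (Finset.mem_coe.mpr hq))]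
      have := congrArg Prod.fst hF'sum
      rw [Prod.fst_sum] at this
      exact this
    have heven : Even F.card := h F hFsub hFsum
    have hodd : Odd F'.card := by
      have := congrArg Prod.snd hF'sum
      rw [Prod.snd_sum] at this
      have h2 : ∑ p ∈ F', p.2 = (F'.card : ZMod 2) := by
        rw [Finset.sum_congr rfl hsnd]
        simp
      rw [h2] at this
      rcases Nat.even_or_odd F'.card with he | ho
      · exfalso
        obtain ⟨r, hr⟩ := he
        rw [hr] at this
        push_cast at this
        rw [show ((r : ZMod 2) + r = 2 * r) by ring, two_eq_zero, zero_mul] at this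
        exact absurd this.symm one_ne_zero
      · exact ho
    rw [hcard] at heven
    exact (Nat.not_even_iff_odd.mpr hodd) heven
  obtain ⟨g, hgx, hgmap⟩ := Submodule.exists_dual_map_eq_bot_of_notMem hnm inferInstance
  refine ⟨g.comp (LinearMap.inl (ZMod 2) _ _), fun a ha => ?_⟩
  have hmem : ((a, 1) : (Fin k → ZMod 2) × ZMod 2) ∈ Submodule.span (ZMod 2) A' :=
    Submodule.subset_span ⟨a, ha, rfl⟩
  have hg0 : g (a, 1) = 0 := by
    have : g (a, 1) ∈ Submodule.map g (Submodule.span (ZMod 2) A') :=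
      Submodule.mem_map_of_mem hmem
    rw [hgmap] at this
    simpa using this
  have hsplit : ((a, 1) : (Fin k → ZMod 2) × ZMod 2) = (a, 0) + (0, 1) := by simp
  rw [hsplit, map_add] at hg0
  have hg1 : g ((0 : Fin k → ZMod 2), (1 : ZMod 2)) = 1 := by
    rcases zmod2_cases (g (0, 1)) with h0 | h1
    · exact absurd h0 hgx
    · exact h1
  rw [hg1] at hg0
  simp only [LinearMap.comp_apply, LinearMap.inl_apply]
  rcases zmod2_cases (g (a, 0)) with h0 | h1
  · rw [h0] at hg0; simp at hg0
  · exact h1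

lemma exists_minimal_zerosum (k : ℕ) (F : Finset (Fin k → ZMod 2)) (hne : F.Nonempty)
    (hs : ∑ v ∈ F, v = 0) :
    ∃ F' ⊆ F, F'.Nonempty ∧ ∑ v ∈ F', v = 0 ∧
      ∀ G ⊆ F', G.Nonempty → ∑ v ∈ G, v = 0 → G = F' := by
  classical
  set P := F.powerset.filter (fun G => G.Nonempty ∧ ∑ v ∈ G, v = 0) with hP
  have hFP : F ∈ P := by
    simp only [hP, Finset.mem_filter, Finset.mem_powerset]
    exact ⟨subset_rfl, hne, hs⟩
  obtain ⟨F', hF'P, hmin⟩ := Finset.exists_min_image P Finset.card ⟨F, hFP⟩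
  simp only [hP, Finset.mem_filter, Finset.mem_powerset] at hF'P
  refine ⟨F', hF'P.1, hF'P.2.1, hF'P.2.2, fun G hG hGne hGs => ?_⟩
  have hGP : G ∈ P := by
    simp only [hP, Finset.mem_filter, Finset.mem_powerset]
    exact ⟨hG.trans hF'P.1, hGne, hGs⟩
  exact Finset.eq_of_subset_of_card_le hG (hmin G hGP)

lemma exists_odd_circuit (k : ℕ) :
    ∀ n (F : Finset (Fin k → ZMod 2)), F.card = n → Odd F.card →
    (0 : Fin k → ZMod 2) ∉ F → (∑ v ∈ F, v = 0) →
    ∃ F' ⊆ F, Odd F'.card ∧ (∑ v ∈ F', v = 0) ∧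
      ∀ G ⊆ F', G.Nonempty → ∑ v ∈ G, v = 0 → G = F' := by
  intro n
  induction n using Nat.strong_induction_on with
  | _ n ih =>
    intro F hcard hodd h0 hsum
    have hpos : 0 < F.card := by
      rcases Nat.eq_zero_or_pos F.card with h | h
      · rw [h] at hodd; exact absurd hodd (by simp)
      · exact h
    have hne : F.Nonempty := Finset.card_pos.mp hpos
    obtain ⟨F₀, hF₀sub, hF₀ne, hF₀sum, hF₀min⟩ := exists_minimal_zerosum k F hne hsum
    by_cases hOdd : Odd F₀.card
    · exact ⟨F₀, hF₀sub, hOdd, hF₀sum, hF₀min⟩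
    · have hF₀pos : 0 < F₀.card := Finset.card_pos.mpr hF₀ne
      have hF₀le : F₀.card ≤ F.card := Finset.card_le_card hF₀sub
      have hsd : (F \ F₀).card = F.card - F₀.card := Finset.card_sdiff_of_subset hF₀sub
      have hsumsd : ∑ v ∈ F \ F₀, v = 0 := by
        have h1 := Finset.sum_sdiff (f := fun v => v) hF₀sub
        rw [hF₀sum, hsum, add_zero] at h1
        exact h1
      have h0sd : (0 : Fin k → ZMod 2) ∉ F \ F₀ := fun h => h0 (Finset.mem_sdiff.mp h).1
      have hoddsd : Odd (F \ F₀).card := by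
        rw [Nat.odd_iff] at hodd ⊢
        rw [Nat.not_odd_iff_even, Nat.even_iff] at hOdd
        rw [hsd]
        omega
      have hlt : (F \ F₀).card < n := by rw [hsd]; omega
      obtain ⟨F', hF's, h1, h2, h3⟩ := ih _ hlt (F \ F₀) rfl hoddsd h0sd hsumsd
      exact ⟨F', hF's.trans (Finset.sdiff_subset), h1, h2, h3⟩

lemma circuit_family (k : ℕ) (F' : Finset (Fin k → ZMod 2))
    (h0 : (0 : Fin k → ZMod 2) ∉ F')
    (hsum : ∑ v ∈ F', v = 0)
    (hmin : ∀ G ⊆ F', G.Nonempty → ∑ v ∈ G, v = 0 → G = F') :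
    ∃ a : Fin F'.card → (Fin k → ZMod 2),
      (∀ i, a i ∈ F') ∧ (∀ i, a i ≠ 0) ∧ Function.Injective a ∧ (∑ i, a i = 0) ∧
      (∀ s : Finset (Fin F'.card), s ≠ Finset.univ →
        LinearIndependent (ZMod 2) (fun i : s => a i)) := by
  classical
  set a : Fin F'.card → (Fin k → ZMod 2) := fun i => ↑(F'.equivFin.symm i) with ha
  have hmem : ∀ i, a i ∈ F' := fun i => (F'.equivFin.symm i).2
  have hainj : Function.Injective a := fun i j h => F'.equivFin.symm.injective (Subtype.ext h)
  have hasum : ∑ i, a i = 0 := by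
    have h1 : ∑ i, a i = ∑ x : {v // v ∈ F'}, (x : Fin k → ZMod 2) :=
      Equiv.sum_comp F'.equivFin.symm (fun x => (x : Fin k → ZMod 2))
    rw [h1, Finset.sum_coe_sort F' (fun v => v)]
    exact hsum
  refine ⟨a, hmem, fun i h => h0 (h ▸ hmem i), hainj, hasum, ?_⟩
  intro s hs
  rw [Fintype.linearIndependent_iff]
  intro g hg
  set t : Finset {x // x ∈ s} := s.attach.filter (fun i => g i = 1) with ht
  set G : Finset (Fin k → ZMod 2) := t.image (fun i => a i.1) with hG
  have hGsum : ∑ v ∈ G, v = ∑ i : {x // x ∈ s}, g i • a ↑i := by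
    rw [hG, Finset.sum_image (fun p _ q _ h => Subtype.ext (hainj h)), ht, Finset.sum_filter]
    rw [← Finset.univ_eq_attach]
    refine Finset.sum_congr rfl fun i _ => ?_
    rcases zmod2_cases (g i) with h | h <;> simp [h]
  have hGsub : G ⊆ F' := by
    intro v hv
    rw [hG, Finset.mem_image] at hv
    obtain ⟨i, _, rfl⟩ := hv
    exact hmem ↑i
  obtain ⟨j, hj⟩ : ∃ j : Fin F'.card, j ∉ s := by
    by_contra hall
    push_neg at hall
    exact hs (Finset.eq_univ_iff_forall.mpr hall)
  have hajG : a j ∉ G := by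
    intro hmemG
    rw [hG, Finset.mem_image] at hmemG
    obtain ⟨i, _, hi⟩ := hmemG
    exact hj (hainj hi ▸ i.2)
  have hGne : ¬ G.Nonempty := by
    intro hne2
    have := hmin G hGsub hne2 (hGsum.trans hg)
    rw [this] at hajG
    exact hajG (hmem j)
  intro i
  rcases zmod2_cases (g i) with h | h
  · exact h
  · exact absurd ⟨a ↑i, Finset.mem_image_of_mem _
      (Finset.mem_filter.mpr ⟨Finset.mem_attach _ _, h⟩)⟩ hGne

end Stmt9Aux

/-- `s_ℝ(K) ≥ k` iff there is a map `ξ : 𝔽₂ᵏ ∖ {0} → N(K)` such that for every minimal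
linear dependence `a₁ + ⋯ + a_l = 0` (with `l = 2r+1 ≥ 3` odd, the `aᵢ` pairwise distinct
and nonzero, and every proper subset of `{a₁,…,a_l}` linearly independent) one has
`ξ(a₁) ∩ ⋯ ∩ ξ(a_l) = ∅`. -/
theorem stmt_9 (m k : ℕ) (K : Set (Finset (Fin m))) (hK : IsSimplicialComplex m K) :
    (∃ S : Matrix (Fin m) (Fin k) (ZMod 2), CondA2 m k K S) ↔
      ∃ ξ : (Fin k → ZMod 2) → Finset (Fin m),
        (∀ a, a ≠ 0 → MinimalNonSimplex m K (ξ a)) ∧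
        ∀ (l : ℕ), 3 ≤ l → Odd l → ∀ a : Fin l → (Fin k → ZMod 2),
          (∀ i, a i ≠ 0) → Function.Injective a → (∑ i, a i = 0) →
          (∀ s : Finset (Fin l), s ≠ Finset.univ →
            LinearIndependent (ZMod 2) (fun i : s => a i)) →
          (Finset.univ.inf fun i => ξ (a i)) = ∅ := by
  classical
  constructor
  · rintro ⟨S, hS⟩
    have hT : ∀ a : Fin k → ZMod 2, a ≠ 0 →
        (Finset.univ.filter (fun i : Fin m => ∑ c, S i c * a c ≠ 0)) ∉ K := by
      intro a ha hmem
      obtain ⟨v, hv, hvd⟩ := Stmt9Aux.dot_of_span_top k _ (hS _ hmem) a ha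
      obtain ⟨i, hi, rfl⟩ := hv
      simp only [Set.mem_setOf_eq, Finset.mem_filter, Finset.mem_univ, true_and,
        not_not] at hi
      exact hvd hi
    choose τ hτ using fun (p : {a : Fin k → ZMod 2 // a ≠ 0}) =>
      Stmt9Aux.exists_mns m K _ (hT p.1 p.2)
    set ξ : (Fin k → ZMod 2) → Finset (Fin m) :=
      fun a => if h : a = 0 then ∅ else τ ⟨a, h⟩ with hξdef
    refine ⟨ξ, fun a ha => ?_, ?_⟩
    · rw [hξdef]
      simp only [dif_neg ha]
      exact (hτ ⟨a, ha⟩).2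
    · intro l hl3 hlodd a hane hainj hasum _hli
      rw [Finset.eq_empty_iff_forall_notMem]
      intro j hj
      have hd1 : ∀ i : Fin l, ∑ c, S j c * a i c = 1 := by
        intro i
        have hji : j ∈ ξ (a i) :=
          Finset.le_iff_subset.mp (Finset.inf_le (Finset.mem_univ i)) hj
        rw [hξdef] at hji
        simp only [dif_neg (hane i)] at hji
        have hfil := (hτ ⟨a i, hane i⟩).1 hji
        have hd := (Finset.mem_filter.mp hfil).2
        rcases Stmt9Aux.zmod2_cases (∑ c, S j c * a i c) with h | h
        · exact absurd h hd
        · exact h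
      have hzero : ∑ i : Fin l, ∑ c, S j c * a i c = 0 := by
        rw [Finset.sum_comm]
        have hc0 : ∀ c, ∑ i : Fin l, a i c = 0 := by
          intro c
          have := congrFun hasum c
          simpa [Finset.sum_apply] using this
        calc ∑ c, ∑ i : Fin l, S j c * a i c
            = ∑ c, S j c * ∑ i : Fin l, a i c := by
              refine Finset.sum_congr rfl fun c _ => (Finset.mul_sum _ _ _).symm
          _ = 0 := by simp [hc0]
      have hone : ∑ i : Fin l, ∑ c, S j c * a i c = 1 := by
        rw [Finset.sum_congr rfl (fun i _ => hd1 i), Finset.sum_const, Finset.card_univ,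
          Fintype.card_fin, nsmul_eq_mul, mul_one]
        exact Stmt9Aux.natCast_zmod2_odd hlodd
      rw [hone] at hzero
      exact one_ne_zero hzero
  · rintro ⟨ξ, hξmns, hξint⟩
    have hpar : ∀ j : Fin m, ∀ F : Finset (Fin k → ZMod 2),
        ↑F ⊆ {a : Fin k → ZMod 2 | a ≠ 0 ∧ j ∈ ξ a} → ∑ v ∈ F, v = 0 → Even F.card := by
      intro j F hFsub hFsum
      rcases Nat.even_or_odd F.card with he | ho
      · exact he
      exfalso
      have h0F : (0 : Fin k → ZMod 2) ∉ F := fun h => (hFsub (Finset.mem_coe.mpr h)).1 rfl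
      obtain ⟨F', hF'sub, hF'odd, hF'sum, hF'min⟩ :=
        Stmt9Aux.exists_odd_circuit k F.card F rfl ho h0F hFsum
      have h0F' : (0 : Fin k → ZMod 2) ∉ F' := fun h => h0F (hF'sub h)
      obtain ⟨a, hamem, hane, hainj, hasum, hali⟩ :=
        Stmt9Aux.circuit_family k F' h0F' hF'sum hF'min
      have hl3 : 3 ≤ F'.card := by
        rw [Nat.odd_iff] at hF'odd
        by_contra hlt
        have h1 : F'.card = 1 := by omega
        obtain ⟨v, hv⟩ := Finset.card_eq_one.mp h1
        rw [hv, Finset.sum_singleton] at hF'sum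
        rw [hv, hF'sum] at h0F'
        exact h0F' (Finset.mem_singleton_self _)
      have hempty := hξint F'.card hl3 hF'odd a hane hainj hasum hali
      have hj : j ∈ Finset.univ.inf fun i => ξ (a i) := by
        have hle : ({j} : Finset (Fin m)) ≤ Finset.univ.inf fun i => ξ (a i) :=
          Finset.le_inf fun i _ => Finset.singleton_subset_iff.mpr
            (hFsub (Finset.mem_coe.mpr (hF'sub (hamem i)))).2
        exact hle (Finset.mem_singleton_self j)
      rw [hempty] at hj
      exact absurd hj (Finset.notMem_empty j)
    choose f hf using fun j => Stmt9Aux.exists_functional k _ (hpar j)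
    refine ⟨fun j c => f j (Pi.single c 1), ?_⟩
    intro σ hσ
    apply Stmt9Aux.span_top_of_dot
    intro a ha
    have hmns := hξmns a ha
    have hnot : ¬ ξ a ⊆ σ := fun hsub => hmns.1 (hK.2 σ hσ _ hsub)
    obtain ⟨i, hiξ, hiσ⟩ := Finset.not_subset.mp hnot
    refine ⟨(fun (j : Fin m) (c : Fin k) => f j (Pi.single c 1)) i, ⟨i, hiσ, rfl⟩, ?_⟩
    have hdot : ∑ c, f i (Pi.single c 1) * a c = f i a := by
      rw [Stmt9Aux.functional_eq_sum k (f i) a]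
      exact Finset.sum_congr rfl fun c _ => mul_comm _ _
    rw [hdot, hf i a ⟨ha, hiξ⟩]
    exact one_ne_zero
end

section
/- s_ℝ(K) ≥ 3 (i.e., there exists an m×3 matrix over 𝔽₂ satisfying condition (A2) for K) if and only if condition (S3) holds: N(K) contains one of the following configurations of pairwise distinct elements: (1) τ₁,…,τ₇ with τ₁∩τ₂∩τ₄ = ∅, τ₁∩τ₃∩τ₅ = ∅, τ₁∩τ₆∩τ₇ = ∅, τ₂∩τ₃∩τ₆ = ∅, τ₂∩τ₅∩τ₇ = ∅, τ₃∩τ₄∩τ₇ = ∅, τ₄∩τ₅∩τ₆ = ∅; (2) τ₁,…,τ₆ with τ₁∩τ₃ = ∅, τ₁∩τ₂∩τ₄ = ∅, τ₁∩τ₂∩τ₅ = ∅, τ₁∩τ₄∩τ₆ = ∅, τ₁∩τ₅∩τ₆ = ∅, τ₂∩τ₃∩τ₆ = ∅, τ₃∩τ₄∩τ₅ = ∅; (3) τ₁,…,τ₅ with τ₁∩τ₂ = ∅, τ₁∩τ₅ = ∅, τ₁∩τ₃∩τ₄ = ∅, τ₂∩τ₃∩τ₅ = ∅, τ₂∩τ₄∩τ₅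 = ∅; (4) τ₁,…,τ₄ with τ₁ ∩ (τ₂ ∪ τ₃ ∪ τ₄) = ∅ and τ₂∩τ₃∩τ₄ = ∅; (5) τ₁, τ₂, τ₃ with τ₁∩τ₂ = τ₁∩τ₃ = τ₂∩τ₃ = ∅. -/
set_option maxRecDepth 20000
set_option maxHeartbeats 1000000

/-- Condition (S2): `N(K)` contains two disjoint elements, or three pairwise distinct
elements with empty common intersection. -/
def CondS2 (m : ℕ) (K : Set (Finset (Fin m))) : Prop :=
  (∃ τ₁ τ₂ τ₃ : Finset (Fin m), MinimalNonSimplex m K τ₁ ∧ MinimalNonSimplex m K τ₂ ∧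
    MinimalNonSimplex m K τ₃ ∧ τ₁ ≠ τ₂ ∧ τ₁ ≠ τ₃ ∧ τ₂ ≠ τ₃ ∧ τ₁ ∩ τ₂ ∩ τ₃ = ∅) ∨
  (∃ τ₁ τ₂ : Finset (Fin m), MinimalNonSimplex m K τ₁ ∧ MinimalNonSimplex m K τ₂ ∧
    τ₁ ≠ τ₂ ∧ τ₁ ∩ τ₂ = ∅)

/-- Condition (S3): `N(K)` contains one of five configurations of pairwise distinct
elements described in Proposition (S3). -/
def CondS3 (m : ℕ) (K : Set (Finset (Fin m))) : Prop :=
  (∃ τ₁ τ₂ τ₃ τ₄ τ₅ τ₆ τ₇ : Finset (Fin m),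
    (∀ τ ∈ [τ₁, τ₂, τ₃, τ₄, τ₅, τ₆, τ₇], MinimalNonSimplex m K τ) ∧
    [τ₁, τ₂, τ₃, τ₄, τ₅, τ₆, τ₇].Pairwise (· ≠ ·) ∧
    τ₁ ∩ τ₂ ∩ τ₄ = ∅ ∧ τ₁ ∩ τ₃ ∩ τ₅ = ∅ ∧ τ₁ ∩ τ₆ ∩ τ₇ = ∅ ∧
    τ₂ ∩ τ₃ ∩ τ₆ = ∅ ∧ τ₂ ∩ τ₅ ∩ τ₇ = ∅ ∧ τ₃ ∩ τ₄ ∩ τ₇ = ∅ ∧ τ₄ ∩ τ₅ ∩ τ₆ = ∅) ∨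
  (∃ τ₁ τ₂ τ₃ τ₄ τ₅ τ₆ : Finset (Fin m),
    (∀ τ ∈ [τ₁, τ₂, τ₃, τ₄, τ₅, τ₆], MinimalNonSimplex m K τ) ∧
    [τ₁, τ₂, τ₃, τ₄, τ₅, τ₆].Pairwise (· ≠ ·) ∧
    τ₁ ∩ τ₃ = ∅ ∧ τ₁ ∩ τ₂ ∩ τ₄ = ∅ ∧ τ₁ ∩ τ₂ ∩ τ₅ = ∅ ∧
    τ₁ ∩ τ₄ ∩ τ₆ = ∅ ∧ τ₁ ∩ τ₅ ∩ τ₆ = ∅ ∧ τ₂ ∩ τ₃ ∩ τ₆ = ∅ ∧ τ₃ ∩ τ₄ ∩ τ₅ = ∅) ∨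
  (∃ τ₁ τ₂ τ₃ τ₄ τ₅ : Finset (Fin m),
    (∀ τ ∈ [τ₁, τ₂, τ₃, τ₄, τ₅], MinimalNonSimplex m K τ) ∧
    [τ₁, τ₂, τ₃, τ₄, τ₅].Pairwise (· ≠ ·) ∧
    τ₁ ∩ τ₂ = ∅ ∧ τ₁ ∩ τ₅ = ∅ ∧ τ₁ ∩ τ₃ ∩ τ₄ = ∅ ∧
    τ₂ ∩ τ₃ ∩ τ₅ = ∅ ∧ τ₂ ∩ τ₄ ∩ τ₅ = ∅) ∨
  (∃ τ₁ τ₂ τ₃ τ₄ : Finset (Fin m),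
    (∀ τ ∈ [τ₁, τ₂, τ₃, τ₄], MinimalNonSimplex m K τ) ∧
    [τ₁, τ₂, τ₃, τ₄].Pairwise (· ≠ ·) ∧
    τ₁ ∩ (τ₂ ∪ τ₃ ∪ τ₄) = ∅ ∧ τ₂ ∩ τ₃ ∩ τ₄ = ∅) ∨
  (∃ τ₁ τ₂ τ₃ : Finset (Fin m),
    (∀ τ ∈ [τ₁, τ₂, τ₃], MinimalNonSimplex m K τ) ∧
    [τ₁, τ₂, τ₃].Pairwise (· ≠ ·) ∧
    τ₁ ∩ τ₂ = ∅ ∧ τ₁ ∩ τ₃ = ∅ ∧ τ₂ ∩ τ₃ = ∅)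

/-! ### Auxiliary material -/

/-- The seven nonzero vectors of `𝔽₂³`, labelling the points of the Fano plane. -/
def lv : Fin 7 → Fin 3 → ZMod 2 :=
  ![![0,0,1], ![0,1,0], ![1,0,0], ![0,1,1], ![1,0,1], ![1,1,0], ![1,1,1]]

/-- Dot product on `𝔽₂³`. -/
def dp (a v : Fin 3 → ZMod 2) : ZMod 2 := a 0 * v 0 + a 1 * v 1 + a 2 * v 2

lemma dp_comm (a v : Fin 3 → ZMod 2) : dp a v = dp v a := by unfold dp; ring

lemma lv_ne : ∀ f : Fin 7, lv f ≠ 0 := by decide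

lemma lv_surj : ∀ v : Fin 3 → ZMod 2, v ≠ 0 → ∃ f : Fin 7, lv f = v := by decide

lemma hyperoval : ∀ A : Finset (Fin 7),
    ¬({0,1,3} : Finset (Fin 7)) ⊆ A → ¬({0,2,4} : Finset (Fin 7)) ⊆ A →
    ¬({0,5,6} : Finset (Fin 7)) ⊆ A → ¬({1,2,5} : Finset (Fin 7)) ⊆ A →
    ¬({1,4,6} : Finset (Fin 7)) ⊆ A → ¬({2,3,6} : Finset (Fin 7)) ⊆ A →
    ¬({3,4,5} : Finset (Fin 7)) ⊆ A →
    ∃ v : Fin 3 → ZMod 2, ∀ f ∈ A, dp (lv f) v = 1 := by decide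

lemma span_top (R : Set (Fin 3 → ZMod 2))
    (h : ∀ v : Fin 3 → ZMod 2, v ≠ 0 → ∃ x ∈ R, dp x v ≠ 0) :
    Submodule.span (ZMod 2) R = ⊤ := by
  by_contra hn
  obtain ⟨φ, hφ0, hφ⟩ := Submodule.exists_dual_map_eq_bot_of_lt_top
    (p := Submodule.span (ZMod 2) R) (lt_top_iff_ne_top.mpr hn) inferInstance
  set v : Fin 3 → ZMod 2 := fun j => φ (fun i => if j = i then 1 else 0) with hv
  have hφx : ∀ x : Fin 3 → ZMod 2, φ x = dp x v := by
    intro x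
    rw [LinearMap.pi_apply_eq_sum_univ φ x, Fin.sum_univ_three]
    simp [dp, hv, smul_eq_mul]
  have hvne : v ≠ 0 := by
    intro h0
    apply hφ0
    apply LinearMap.ext
    intro x
    rw [hφx, h0]
    simp [dp]
  obtain ⟨x, hxR, hxd⟩ := h v hvne
  apply hxd
  rw [← hφx]
  have hx : φ x ∈ Submodule.map φ (Submodule.span (ZMod 2) R) :=
    Submodule.mem_map_of_mem (Submodule.subset_span hxR)
  rw [hφ] at hx
  simpa using hx

section FinsetHelpers

variable {α : Type*} [DecidableEq α] {a b c d : Finset α}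

lemma dcomm (h : a ∩ b = ∅) : b ∩ a = ∅ := by rwa [Finset.inter_comm]

lemma iABB (a b : Finset α) : a ∩ b ∩ b = a ∩ b := by
  rw [Finset.inter_assoc, Finset.inter_self]

lemma iABA (a b : Finset α) : a ∩ b ∩ a = a ∩ b := by
  rw [Finset.inter_right_comm, Finset.inter_self]

lemma fne (h0 : a ≠ ∅) (h : a ∩ b = ∅) : a ≠ b := by
  intro e
  apply h0
  rw [e] at h ⊢
  rwa [Finset.inter_self] at h

lemma union3_empty (h1 : a ∩ b = ∅) (h2 : a ∩ c = ∅) (h3 : a ∩ d = ∅) :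
    a ∩ (b ∪ c ∪ d) = ∅ := by
  rw [Finset.eq_empty_iff_forall_notMem] at h1 h2 h3 ⊢
  intro x hx
  simp only [Finset.mem_inter, Finset.mem_union] at hx
  obtain ⟨hxa, (hb | hc) | hd⟩ := hx
  · exact h1 x (Finset.mem_inter.mpr ⟨hxa, hb⟩)
  · exact h2 x (Finset.mem_inter.mpr ⟨hxa, hc⟩)
  · exact h3 x (Finset.mem_inter.mpr ⟨hxa, hd⟩)

end FinsetHelpers

lemma exists_min (m : ℕ) (K : Set (Finset (Fin m))) :
    ∀ ω : Finset (Fin m), ω ∉ K → ∃ τ, τ ⊆ ω ∧ MinimalNonSimplex m K τ := by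
  intro ω
  induction ω using Finset.strongInduction with
  | _ ω ih =>
    intro hω
    by_cases h : ∀ ρ ⊂ ω, ρ ∈ K
    · exact ⟨ω, Finset.Subset.rfl, hω, h⟩
    · push_neg at h
      obtain ⟨ρ, hsub, hρ⟩ := h
      obtain ⟨τ, hτsub, hτ⟩ := ih ρ hsub hρ
      exact ⟨τ, hτsub.trans hsub.subset, hτ⟩

lemma conf1 {m : ℕ} {K : Set (Finset (Fin m))} {v1 v2 v3 v4 v5 v6 v7 : Finset (Fin m)}
    (h1 : MinimalNonSimplex m K v1) (h2 : MinimalNonSimplex m K v2) (h3 : MinimalNonSimplex m K v3) (h4 : MinimalNonSimplex m K v4) (h5 : MinimalNonSimplex m K v5) (h6 : MinimalNonSimplex m K v6) (h7 : MinimalNonSimplex m K v7)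
    (n12 : v1 ≠ v2) (n13 : v1 ≠ v3) (n14 : v1 ≠ v4) (n15 : v1 ≠ v5) (n16 : v1 ≠ v6) (n17 : v1 ≠ v7) (n23 : v2 ≠ v3) (n24 : v2 ≠ v4) (n25 : v2 ≠ v5) (n26 : v2 ≠ v6) (n27 : v2 ≠ v7) (n34 : v3 ≠ v4) (n35 : v3 ≠ v5) (n36 : v3 ≠ v6) (n37 : v3 ≠ v7) (n45 : v4 ≠ v5) (n46 : v4 ≠ v6) (n47 : v4 ≠ v7) (n56 : v5 ≠ v6) (n57 : v5 ≠ v7) (n67 : v6 ≠ v7)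
    (c1 : v1 ∩ v2 ∩ v4 = ∅) (c2 : v1 ∩ v3 ∩ v5 = ∅) (c3 : v1 ∩ v6 ∩ v7 = ∅) (c4 : v2 ∩ v3 ∩ v6 = ∅) (c5 : v2 ∩ v5 ∩ v7 = ∅) (c6 : v3 ∩ v4 ∩ v7 = ∅) (c7 : v4 ∩ v5 ∩ v6 = ∅)
    : CondS3 m K := by
  refine Or.inl ⟨v1, v2, v3, v4, v5, v6, v7, ?_, ?_, c1, c2, c3, c4, c5, c6, c7⟩
  · intro τ hτ
    simp only [List.mem_cons, List.not_mem_nil, or_false] at hτ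
    rcases hτ with rfl|rfl|rfl|rfl|rfl|rfl|rfl <;> assumption
  · simp only [List.pairwise_cons, List.mem_cons, List.not_mem_nil, or_false,
      forall_eq_or_imp, forall_eq, List.Pairwise.nil, and_true, IsEmpty.forall_iff]
    tauto

lemma conf2 {m : ℕ} {K : Set (Finset (Fin m))} {v1 v2 v3 v4 v5 v6 : Finset (Fin m)}
    (h1 : MinimalNonSimplex m K v1) (h2 : MinimalNonSimplex m K v2) (h3 : MinimalNonSimplex m K v3) (h4 : MinimalNonSimplex m K v4) (h5 : MinimalNonSimplex m K v5) (h6 : MinimalNonSimplex m K v6)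
    (n12 : v1 ≠ v2) (n13 : v1 ≠ v3) (n14 : v1 ≠ v4) (n15 : v1 ≠ v5) (n16 : v1 ≠ v6) (n23 : v2 ≠ v3) (n24 : v2 ≠ v4) (n25 : v2 ≠ v5) (n26 : v2 ≠ v6) (n34 : v3 ≠ v4) (n35 : v3 ≠ v5) (n36 : v3 ≠ v6) (n45 : v4 ≠ v5) (n46 : v4 ≠ v6) (n56 : v5 ≠ v6)
    (c1 : v1 ∩ v3 = ∅) (c2 : v1 ∩ v2 ∩ v4 = ∅) (c3 : v1 ∩ v2 ∩ v5 = ∅) (c4 : v1 ∩ v4 ∩ v6 = ∅) (c5 : v1 ∩ v5 ∩ v6 = ∅) (c6 : v2 ∩ v3 ∩ v6 = ∅) (c7 : v3 ∩ v4 ∩ v5 = ∅)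
    : CondS3 m K := by
  refine Or.inr (Or.inl ⟨v1, v2, v3, v4, v5, v6, ?_, ?_, c1, c2, c3, c4, c5, c6, c7⟩)
  · intro τ hτ
    simp only [List.mem_cons, List.not_mem_nil, or_false] at hτ
    rcases hτ with rfl|rfl|rfl|rfl|rfl|rfl <;> assumption
  · simp only [List.pairwise_cons, List.mem_cons, List.not_mem_nil, or_false,
      forall_eq_or_imp, forall_eq, List.Pairwise.nil, and_true, IsEmpty.forall_iff]
    tauto

lemma conf3 {m : ℕ} {K : Set (Finset (Fin m))} {v1 v2 v3 v4 v5 : Finset (Fin m)}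
    (h1 : MinimalNonSimplex m K v1) (h2 : MinimalNonSimplex m K v2) (h3 : MinimalNonSimplex m K v3) (h4 : MinimalNonSimplex m K v4) (h5 : MinimalNonSimplex m K v5)
    (n12 : v1 ≠ v2) (n13 : v1 ≠ v3) (n14 : v1 ≠ v4) (n15 : v1 ≠ v5) (n23 : v2 ≠ v3) (n24 : v2 ≠ v4) (n25 : v2 ≠ v5) (n34 : v3 ≠ v4) (n35 : v3 ≠ v5) (n45 : v4 ≠ v5)
    (c1 : v1 ∩ v2 = ∅) (c2 : v1 ∩ v5 = ∅) (c3 : v1 ∩ v3 ∩ v4 = ∅) (c4 : v2 ∩ v3 ∩ v5 = ∅) (c5 : v2 ∩ v4 ∩ v5 = ∅)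
    : CondS3 m K := by
  refine Or.inr (Or.inr (Or.inl ⟨v1, v2, v3, v4, v5, ?_, ?_, c1, c2, c3, c4, c5⟩))
  · intro τ hτ
    simp only [List.mem_cons, List.not_mem_nil, or_false] at hτ
    rcases hτ with rfl|rfl|rfl|rfl|rfl <;> assumption
  · simp only [List.pairwise_cons, List.mem_cons, List.not_mem_nil, or_false,
      forall_eq_or_imp, forall_eq, List.Pairwise.nil, and_true, IsEmpty.forall_iff]
    tauto

lemma conf4 {m : ℕ} {K : Set (Finset (Fin m))} {v1 v2 v3 v4 : Finset (Fin m)}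
    (h1 : MinimalNonSimplex m K v1) (h2 : MinimalNonSimplex m K v2) (h3 : MinimalNonSimplex m K v3) (h4 : MinimalNonSimplex m K v4)
    (n12 : v1 ≠ v2) (n13 : v1 ≠ v3) (n14 : v1 ≠ v4) (n23 : v2 ≠ v3) (n24 : v2 ≠ v4) (n34 : v3 ≠ v4)
    (c1 : v1 ∩ (v2 ∪ v3 ∪ v4) = ∅) (c2 : v2 ∩ v3 ∩ v4 = ∅)
    : CondS3 m K := by
  refine Or.inr (Or.inr (Or.inr (Or.inl ⟨v1, v2, v3, v4, ?_, ?_, c1, c2⟩)))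
  · intro τ hτ
    simp only [List.mem_cons, List.not_mem_nil, or_false] at hτ
    rcases hτ with rfl|rfl|rfl|rfl <;> assumption
  · simp only [List.pairwise_cons, List.mem_cons, List.not_mem_nil, or_false,
      forall_eq_or_imp, forall_eq, List.Pairwise.nil, and_true, IsEmpty.forall_iff]
    tauto

lemma conf5 {m : ℕ} {K : Set (Finset (Fin m))} {v1 v2 v3 : Finset (Fin m)}
    (h1 : MinimalNonSimplex m K v1) (h2 : MinimalNonSimplex m K v2) (h3 : MinimalNonSimplex m K v3)
    (n12 : v1 ≠ v2) (n13 : v1 ≠ v3) (n23 : v2 ≠ v3)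
    (c1 : v1 ∩ v2 = ∅) (c2 : v1 ∩ v3 = ∅) (c3 : v2 ∩ v3 = ∅)
    : CondS3 m K := by
  refine Or.inr (Or.inr (Or.inr (Or.inr ⟨v1, v2, v3, ?_, ?_, c1, c2, c3⟩)))
  · intro τ hτ
    simp only [List.mem_cons, List.not_mem_nil, or_false] at hτ
    rcases hτ with rfl|rfl|rfl <;> assumption
  · simp only [List.pairwise_cons, List.mem_cons, List.not_mem_nil, or_false,
      forall_eq_or_imp, forall_eq, List.Pairwise.nil, and_true, IsEmpty.forall_iff]
    tauto


/-- Hypothesis bundle for the Fano-indexed family of minimal non-simplices. -/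
def Hyp (m : ℕ) (K : Set (Finset (Fin m))) (t : Fin 7 → Finset (Fin m)) : Prop :=
  (∀ f, MinimalNonSimplex m K (t f)) ∧ (∀ f, t f ≠ ∅) ∧
  (∀ a b c : Fin 7, lv a + lv b + lv c = 0 → t a ∩ t b ∩ t c = ∅)

lemma Hyp.perm {m : ℕ} {K : Set (Finset (Fin m))} {t : Fin 7 → Finset (Fin m)}
    (h : Hyp m K t) (π : Fin 7 → Fin 7)
    (hπ : ∀ a b c : Fin 7, lv a + lv b + lv c = 0 →
      lv (π a) + lv (π b) + lv (π c) = 0) :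
    Hyp m K (fun i => t (π i)) :=
  ⟨fun f => h.1 _, fun f => h.2.1 _, fun a b c hs => h.2.2 _ _ _ (hπ a b c hs)⟩

lemma exact_perm {m : ℕ} (t : Fin 7 → Finset (Fin m)) (π : Fin 7 → Fin 7) (a b : Fin 7)
    (hinj : ∀ k : Fin 7, k ≠ a → k ≠ b → π k ≠ π a ∧ π k ≠ π b)
    (hex : ∀ j, j ≠ π a → j ≠ π b → t j ≠ t (π a)) :
    ∀ k, k ≠ a → k ≠ b → t (π k) ≠ t (π a) :=
  fun k h1 h2 => hex (π k) (hinj k h1 h2).1 (hinj k h1 h2).2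

section Main

variable {m : ℕ} {K : Set (Finset (Fin m))}

lemma main3 (t : Fin 7 → Finset (Fin m)) (h : Hyp m K t)
    (h01 : t 0 = t 1) (h12 : t 1 = t 2) : CondS3 m K := by
  obtain ⟨hmns, hne, hcond⟩ := h
  have h02 : t 0 = t 2 := h01.trans h12
  have d03 : t 0 ∩ t 3 = ∅ := by
    have hh := hcond 0 1 3 (by decide); rwa [← h01, Finset.inter_self] at hh
  have d04 : t 0 ∩ t 4 = ∅ := by
    have hh := hcond 0 2 4 (by decide); rwa [← h02, Finset.inter_self] at hh
  have d05 : t 0 ∩ t 5 = ∅ := by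
    have hh := hcond 1 2 5 (by decide); rwa [← h12, Finset.inter_self, ← h01] at hh
  have h345 := hcond 3 4 5 (by decide)
  by_cases e34 : t 3 = t 4
  · have d35 : t 3 ∩ t 5 = ∅ := by rwa [← e34, Finset.inter_self] at h345
    exact conf5 (hmns 0) (hmns 3) (hmns 5) (fne (hne 0) d03) (fne (hne 0) d05)
      (fne (hne 3) d35) d03 d05 d35
  by_cases e35 : t 3 = t 5
  · have d34 : t 3 ∩ t 4 = ∅ := by rwa [← e35, iABA] at h345
    exact conf5 (hmns 0) (hmns 3) (hmns 4) (fne (hne 0) d03) (fne (hne 0) d04)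
      (fne (hne 3) d34) d03 d04 d34
  by_cases e45 : t 4 = t 5
  · have d34 : t 3 ∩ t 4 = ∅ := by rwa [← e45, iABB] at h345
    exact conf5 (hmns 0) (hmns 3) (hmns 4) (fne (hne 0) d03) (fne (hne 0) d04)
      (fne (hne 3) d34) d03 d04 d34
  · exact conf4 (hmns 0) (hmns 3) (hmns 4) (hmns 5)
      (fne (hne 0) d03) (fne (hne 0) d04) (fne (hne 0) d05) e34 e35 e45
      (union3_empty d03 d04 d05) h345

lemma main_i (t : Fin 7 → Finset (Fin m)) (h : Hyp m K t)
    (h01 : t 0 = t 1) (h34 : t 3 = t 4)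
    (hexT : ∀ k, k ≠ 0 → k ≠ 1 → t k ≠ t 0) (hexU : ∀ k, k ≠ 3 → k ≠ 4 → t k ≠ t 3) :
    CondS3 m K := by
  obtain ⟨hmns, hne, hcond⟩ := h
  have d03 : t 0 ∩ t 3 = ∅ := by
    have hh := hcond 0 1 3 (by decide); rwa [← h01, Finset.inter_self] at hh
  have d35 : t 3 ∩ t 5 = ∅ := by
    have hh := hcond 3 4 5 (by decide); rwa [← h34, Finset.inter_self] at hh
  have d30 : t 3 ∩ t 0 = ∅ := dcomm d03
  by_cases e25 : t 2 = t 5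
  · have d02 : t 0 ∩ t 2 = ∅ := by
      have hh := hcond 1 2 5 (by decide); rwa [← h01, ← e25, iABB] at hh
    have d32 : t 3 ∩ t 2 = ∅ := by rw [e25]; exact d35
    exact conf5 (hmns 0) (hmns 3) (hmns 2) (fne (hne 0) d03) (fne (hne 0) d02)
      (fne (hne 3) d32) d03 d02 d32
  by_cases e56 : t 5 = t 6
  · have d05 : t 0 ∩ t 5 = ∅ := by
      have hh := hcond 0 5 6 (by decide); rwa [← e56, iABB] at hh
    exact conf5 (hmns 0) (hmns 3) (hmns 5) (fne (hne 0) d03) (fne (hne 0) d05)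
      (fne (hne 3) d35) d03 d05 d35
  by_cases e26 : t 2 = t 6
  · have d32 : t 3 ∩ t 2 = ∅ := by
      have hh := hcond 3 2 6 (by decide); rwa [← e26, iABB] at hh
    have h025 : t 0 ∩ t 2 ∩ t 5 = ∅ := by
      have hh := hcond 1 2 5 (by decide); rwa [← h01] at hh
    exact conf4 (hmns 3) (hmns 0) (hmns 2) (hmns 5)
      (fne (hne 3) d30) (fne (hne 3) d32) (fne (hne 3) d35)
      (Ne.symm (hexT 2 (by decide) (by decide))) (Ne.symm (hexT 5 (by decide) (by decide)))
      e25 (union3_empty d30 d32 d35) h025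
  · have h326 := hcond 3 2 6 (by decide)
    have h025 : t 0 ∩ t 2 ∩ t 5 = ∅ := by
      have hh := hcond 1 2 5 (by decide); rwa [← h01] at hh
    have h065 := hcond 0 6 5 (by decide)
    exact conf3 (hmns 3) (hmns 0) (hmns 2) (hmns 6) (hmns 5)
      (fne (hne 3) d30) (Ne.symm (hexU 2 (by decide) (by decide)))
      (Ne.symm (hexU 6 (by decide) (by decide))) (fne (hne 3) d35)
      (Ne.symm (hexT 2 (by decide) (by decide))) (Ne.symm (hexT 6 (by decide) (by decide)))
      (Ne.symm (hexT 5 (by decide) (by decide)))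
      e26 e25 (fun hh => e56 hh.symm)
      d30 d35 h326 h025 h065

lemma main_iia (t : Fin 7 → Finset (Fin m)) (h : Hyp m K t)
    (h01 : t 0 = t 1) (h45 : t 4 = t 5)
    (hexT : ∀ k, k ≠ 0 → k ≠ 1 → t k ≠ t 0) (hexU : ∀ k, k ≠ 4 → k ≠ 5 → t k ≠ t 4) :
    CondS3 m K := by
  obtain ⟨hmns, hne, hcond⟩ := h
  have d03 : t 0 ∩ t 3 = ∅ := by
    have hh := hcond 0 1 3 (by decide); rwa [← h01, Finset.inter_self] at hh
  have d30 : t 3 ∩ t 0 = ∅ := dcomm d03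
  have d34 : t 3 ∩ t 4 = ∅ := by
    have hh := hcond 3 4 5 (by decide); rwa [← h45, iABB] at hh
  have n04 : t 0 ≠ t 4 := Ne.symm (hexT 4 (by decide) (by decide))
  by_cases e23 : t 2 = t 3
  · have d36 : t 3 ∩ t 6 = ∅ := by
      have hh := hcond 2 3 6 (by decide); rwa [e23, Finset.inter_self] at hh
    have h046 : t 0 ∩ t 4 ∩ t 6 = ∅ := by
      have hh := hcond 0 5 6 (by decide); rwa [← h45] at hh
    exact conf4 (hmns 3) (hmns 0) (hmns 4) (hmns 6)
      (fne (hne 3) d30) (fne (hne 3) d34) (fne (hne 3) d36)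
      n04 (Ne.symm (hexT 6 (by decide) (by decide))) (Ne.symm (hexU 6 (by decide) (by decide)))
      (union3_empty d30 d34 d36) h046
  by_cases e36 : t 3 = t 6
  · have d32 : t 3 ∩ t 2 = ∅ := by
      have hh := hcond 6 2 3 (by decide); rwa [← e36, iABA] at hh
    have h042 : t 0 ∩ t 4 ∩ t 2 = ∅ := hcond 0 4 2 (by decide)
    exact conf4 (hmns 3) (hmns 0) (hmns 4) (hmns 2)
      (fne (hne 3) d30) (fne (hne 3) d34) (fne (hne 3) d32)
      n04 (Ne.symm (hexT 2 (by decide) (by decide))) (Ne.symm (hexU 2 (by decide) (by decide)))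
      (union3_empty d30 d34 d32) h042
  by_cases e26 : t 2 = t 6
  · have d32 : t 3 ∩ t 2 = ∅ := by
      have hh := hcond 3 2 6 (by decide); rwa [← e26, iABB] at hh
    have h042 : t 0 ∩ t 4 ∩ t 2 = ∅ := hcond 0 4 2 (by decide)
    exact conf4 (hmns 3) (hmns 0) (hmns 4) (hmns 2)
      (fne (hne 3) d30) (fne (hne 3) d34) (fne (hne 3) d32)
      n04 (Ne.symm (hexT 2 (by decide) (by decide))) (Ne.symm (hexU 2 (by decide) (by decide)))
      (union3_empty d30 d34 d32) h042
  · have h326 := hcond 3 2 6 (by decide)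
    have h024 : t 0 ∩ t 2 ∩ t 4 = ∅ := by
      have hh := hcond 1 2 5 (by decide); rwa [← h01, ← h45] at hh
    have h064 : t 0 ∩ t 6 ∩ t 4 = ∅ := by
      have hh := hcond 0 6 5 (by decide); rwa [← h45] at hh
    exact conf3 (hmns 3) (hmns 0) (hmns 2) (hmns 6) (hmns 4)
      (fne (hne 3) d30) (fun hh => e23 hh.symm) e36 (fne (hne 3) d34)
      (Ne.symm (hexT 2 (by decide) (by decide))) (Ne.symm (hexT 6 (by decide) (by decide)))
      n04 e26 (hexU 2 (by decide) (by decide)) (hexU 6 (by decide) (by decide))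
      d30 d34 h326 h024 h064

lemma main2 (t : Fin 7 → Finset (Fin m)) (h : Hyp m K t) (h01 : t 0 = t 1) :
    CondS3 m K := by
  obtain ⟨hmns, hne, hcond⟩ := id h
  by_cases hk2 : t 2 = t 0
  · exact main3 t h h01 (h01.symm.trans hk2.symm)
  by_cases hk4 : t 4 = t 0
  · exact main3 (fun i => t (![0,1,4,3,2,6,5] i)) (h.perm ![0,1,4,3,2,6,5] (by decide)) h01
      (h01.symm.trans hk4.symm)
  by_cases hk5 : t 5 = t 0
  · exact main3 (fun i => t (![0,1,5,3,6,2,4] i)) (h.perm ![0,1,5,3,6,2,4] (by decide)) h01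
      (h01.symm.trans hk5.symm)
  by_cases hk6 : t 6 = t 0
  · exact main3 (fun i => t (![0,1,6,3,5,4,2] i)) (h.perm ![0,1,6,3,5,4,2] (by decide)) h01
      (h01.symm.trans hk6.symm)
  have d03 : t 0 ∩ t 3 = ∅ := by
    have hh := hcond 0 1 3 (by decide); rwa [← h01, Finset.inter_self] at hh
  have hexT : ∀ k, k ≠ 0 → k ≠ 1 → t k ≠ t 0 := by
    intro k hka hkb
    fin_cases k
    · simp at hka
    · simp at hkb
    · exact hk2
    · exact fne (hne 3) (dcomm d03)
    · exact hk4
    · exact hk5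
    · exact hk6
  by_cases hp23 : t 2 = t 3
  ·
    by_cases h3c4 : t 4 = t 2
    · exact main3 (fun i => t (![2,3,4,6,0,5,1] i)) (h.perm ![2,3,4,6,0,5,1] (by decide))
        hp23 (hp23.symm.trans h3c4.symm)
    by_cases h3c5 : t 5 = t 2
    · exact main3 (fun i => t (![2,3,5,6,1,4,0] i)) (h.perm ![2,3,5,6,1,4,0] (by decide))
        hp23 (hp23.symm.trans h3c5.symm)
    by_cases h3c6 : t 6 = t 2
    · exfalso
      have hcc := hcond 2 3 6 (by decide)
      rw [← hp23, h3c6, Finset.inter_self, Finset.inter_self] at hcc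
      exact hne 2 hcc
    · have hexD : ∀ j, j ≠ 2 → j ≠ 3 → t j ≠ t 2 := by
        intro j hja hjb
        fin_cases j
        · exact fun hh => (hexT 2 (by decide) (by decide)) hh.symm
        · exact fun hh => (hexT 2 (by decide) (by decide)) (hh.symm.trans h01.symm)
        · simp at hja
        · simp at hjb
        · exact h3c4
        · exact h3c5
        · exact h3c6
      have hexD' : ∀ j, j ≠ (3:Fin 7) → j ≠ 2 → t j ≠ t 3 := fun j u1 u2 hh => hexD j u2 u1 (hh.trans hp23.symm)
      exact main_i (fun i => t (![0,1,4,3,2,6,5] i)) (h.perm ![0,1,4,3,2,6,5] (by decide)) h01 hp23.symm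
        (exact_perm t ![0,1,4,3,2,6,5] 0 1 (by decide) hexT) (exact_perm t ![0,1,4,3,2,6,5] 3 4 (by decide) hexD')
  by_cases hp24 : t 2 = t 4
  ·
    by_cases h3c3 : t 3 = t 2
    · exact main3 (fun i => t (![2,4,3,0,6,5,1] i)) (h.perm ![2,4,3,0,6,5,1] (by decide))
        hp24 (hp24.symm.trans h3c3.symm)
    by_cases h3c5 : t 5 = t 2
    · exact main3 (fun i => t (![2,4,5,0,1,3,6] i)) (h.perm ![2,4,5,0,1,3,6] (by decide))
        hp24 (hp24.symm.trans h3c5.symm)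
    by_cases h3c6 : t 6 = t 2
    · exact main3 (fun i => t (![2,4,6,0,3,1,5] i)) (h.perm ![2,4,6,0,3,1,5] (by decide))
        hp24 (hp24.symm.trans h3c6.symm)
    · have hexD : ∀ j, j ≠ 2 → j ≠ 4 → t j ≠ t 2 := by
        intro j hja hjb
        fin_cases j
        · exact fun hh => (hexT 2 (by decide) (by decide)) hh.symm
        · exact fun hh => (hexT 2 (by decide) (by decide)) (hh.symm.trans h01.symm)
        · simp at hja
        · exact h3c3
        · simp at hjb
        · exact h3c5
        · exact h3c6
      exact main_i (fun i => t (![2,4,5,0,1,3,6] i)) (h.perm ![2,4,5,0,1,3,6] (by decide)) hp24 h01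
        (exact_perm t ![2,4,5,0,1,3,6] 0 1 (by decide) hexD) (exact_perm t ![2,4,5,0,1,3,6] 3 4 (by decide) hexT)
  by_cases hp25 : t 2 = t 5
  ·
    by_cases h3c3 : t 3 = t 2
    · exact main3 (fun i => t (![2,5,3,1,6,4,0] i)) (h.perm ![2,5,3,1,6,4,0] (by decide))
        hp25 (hp25.symm.trans h3c3.symm)
    by_cases h3c4 : t 4 = t 2
    · exact main3 (fun i => t (![2,5,4,1,0,3,6] i)) (h.perm ![2,5,4,1,0,3,6] (by decide))
        hp25 (hp25.symm.trans h3c4.symm)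
    by_cases h3c6 : t 6 = t 2
    · exact main3 (fun i => t (![2,5,6,1,3,0,4] i)) (h.perm ![2,5,6,1,3,0,4] (by decide))
        hp25 (hp25.symm.trans h3c6.symm)
    · have hexD : ∀ j, j ≠ 2 → j ≠ 5 → t j ≠ t 2 := by
        intro j hja hjb
        fin_cases j
        · exact fun hh => (hexT 2 (by decide) (by decide)) hh.symm
        · exact fun hh => (hexT 2 (by decide) (by decide)) (hh.symm.trans h01.symm)
        · simp at hja
        · exact h3c3
        · exact h3c4
        · simp at hjb
        · exact h3c6
      have hexT1 : ∀ j, j ≠ (1:Fin 7) → j ≠ 0 → t j ≠ t 1 := fun j u1 u0 hh => hexT j u0 u1 (hh.trans h01.symm)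
      exact main_i (fun i => t (![2,5,4,1,0,3,6] i)) (h.perm ![2,5,4,1,0,3,6] (by decide)) hp25 h01.symm
        (exact_perm t ![2,5,4,1,0,3,6] 0 1 (by decide) hexD) (exact_perm t ![2,5,4,1,0,3,6] 3 4 (by decide) hexT1)
  by_cases hp26 : t 2 = t 6
  ·
    by_cases h3c3 : t 3 = t 2
    · exfalso
      have hcc := hcond 2 6 3 (by decide)
      rw [← hp26, h3c3, Finset.inter_self, Finset.inter_self] at hcc
      exact hne 2 hcc
    by_cases h3c4 : t 4 = t 2
    · exact main3 (fun i => t (![2,6,4,3,0,1,5] i)) (h.perm ![2,6,4,3,0,1,5] (by decide))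
        hp26 (hp26.symm.trans h3c4.symm)
    by_cases h3c5 : t 5 = t 2
    · exact main3 (fun i => t (![2,6,5,3,1,0,4] i)) (h.perm ![2,6,5,3,1,0,4] (by decide))
        hp26 (hp26.symm.trans h3c5.symm)
    · have hexD : ∀ j, j ≠ 2 → j ≠ 6 → t j ≠ t 2 := by
        intro j hja hjb
        fin_cases j
        · exact fun hh => (hexT 2 (by decide) (by decide)) hh.symm
        · exact fun hh => (hexT 2 (by decide) (by decide)) (hh.symm.trans h01.symm)
        · simp at hja
        · exact h3c3
        · exact h3c4
        · exact h3c5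
        · simp at hjb
      exact main_iia (fun i => t (![0,1,4,3,2,6,5] i)) (h.perm ![0,1,4,3,2,6,5] (by decide)) h01 hp26
        (exact_perm t ![0,1,4,3,2,6,5] 0 1 (by decide) hexT) (exact_perm t ![0,1,4,3,2,6,5] 4 5 (by decide) hexD)
  by_cases hp34 : t 3 = t 4
  ·
    by_cases h3c2 : t 2 = t 3
    · exact main3 (fun i => t (![3,4,2,5,6,0,1] i)) (h.perm ![3,4,2,5,6,0,1] (by decide))
        hp34 (hp34.symm.trans h3c2.symm)
    by_cases h3c5 : t 5 = t 3
    · exfalso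
      have hcc := hcond 3 4 5 (by decide)
      rw [← hp34, h3c5, Finset.inter_self, Finset.inter_self] at hcc
      exact hne 3 hcc
    by_cases h3c6 : t 6 = t 3
    · exact main3 (fun i => t (![3,4,6,5,2,1,0] i)) (h.perm ![3,4,6,5,2,1,0] (by decide))
        hp34 (hp34.symm.trans h3c6.symm)
    · have hexD : ∀ j, j ≠ 3 → j ≠ 4 → t j ≠ t 3 := by
        intro j hja hjb
        fin_cases j
        · exact fun hh => (hexT 3 (by decide) (by decide)) hh.symm
        · exact fun hh => (hexT 3 (by decide) (by decide)) (hh.symm.trans h01.symm)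
        · exact h3c2
        · simp at hja
        · simp at hjb
        · exact h3c5
        · exact h3c6
      exact main_i (fun i => t (![0,1,2,3,4,5,6] i)) (h.perm ![0,1,2,3,4,5,6] (by decide)) h01 hp34
        (exact_perm t ![0,1,2,3,4,5,6] 0 1 (by decide) hexT) (exact_perm t ![0,1,2,3,4,5,6] 3 4 (by decide) hexD)
  by_cases hp35 : t 3 = t 5
  ·
    by_cases h3c2 : t 2 = t 3
    · exact main3 (fun i => t (![3,5,2,4,6,1,0] i)) (h.perm ![3,5,2,4,6,1,0] (by decide))
        hp35 (hp35.symm.trans h3c2.symm)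
    by_cases h3c4 : t 4 = t 3
    · exfalso
      have hcc := hcond 3 5 4 (by decide)
      rw [← hp35, h3c4, Finset.inter_self, Finset.inter_self] at hcc
      exact hne 3 hcc
    by_cases h3c6 : t 6 = t 3
    · exact main3 (fun i => t (![3,5,6,4,2,0,1] i)) (h.perm ![3,5,6,4,2,0,1] (by decide))
        hp35 (hp35.symm.trans h3c6.symm)
    · have hexD : ∀ j, j ≠ 3 → j ≠ 5 → t j ≠ t 3 := by
        intro j hja hjb
        fin_cases j
        · exact fun hh => (hexT 3 (by decide) (by decide)) hh.symm
        · exact fun hh => (hexT 3 (by decide) (by decide)) (hh.symm.trans h01.symm)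
        · exact h3c2
        · simp at hja
        · exact h3c4
        · simp at hjb
        · exact h3c6
      exact main_i (fun i => t (![0,1,6,3,5,4,2] i)) (h.perm ![0,1,6,3,5,4,2] (by decide)) h01 hp35
        (exact_perm t ![0,1,6,3,5,4,2] 0 1 (by decide) hexT) (exact_perm t ![0,1,6,3,5,4,2] 3 4 (by decide) hexD)
  by_cases hp36 : t 3 = t 6
  ·
    by_cases h3c2 : t 2 = t 3
    · exfalso
      have hcc := hcond 3 6 2 (by decide)
      rw [← hp36, h3c2, Finset.inter_self, Finset.inter_self] at hcc
      exact hne 3 hcc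
    by_cases h3c4 : t 4 = t 3
    · exact main3 (fun i => t (![3,6,4,2,5,1,0] i)) (h.perm ![3,6,4,2,5,1,0] (by decide))
        hp36 (hp36.symm.trans h3c4.symm)
    by_cases h3c5 : t 5 = t 3
    · exact main3 (fun i => t (![3,6,5,2,4,0,1] i)) (h.perm ![3,6,5,2,4,0,1] (by decide))
        hp36 (hp36.symm.trans h3c5.symm)
    · have hexD : ∀ j, j ≠ 3 → j ≠ 6 → t j ≠ t 3 := by
        intro j hja hjb
        fin_cases j
        · exact fun hh => (hexT 3 (by decide) (by decide)) hh.symm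
        · exact fun hh => (hexT 3 (by decide) (by decide)) (hh.symm.trans h01.symm)
        · exact h3c2
        · simp at hja
        · exact h3c4
        · exact h3c5
        · simp at hjb
      exact main_i (fun i => t (![0,1,5,3,6,2,4] i)) (h.perm ![0,1,5,3,6,2,4] (by decide)) h01 hp36
        (exact_perm t ![0,1,5,3,6,2,4] 0 1 (by decide) hexT) (exact_perm t ![0,1,5,3,6,2,4] 3 4 (by decide) hexD)
  by_cases hp45 : t 4 = t 5
  ·
    by_cases h3c2 : t 2 = t 4
    · exact main3 (fun i => t (![4,5,2,3,0,1,6] i)) (h.perm ![4,5,2,3,0,1,6] (by decide))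
        hp45 (hp45.symm.trans h3c2.symm)
    by_cases h3c3 : t 3 = t 4
    · exfalso
      have hcc := hcond 4 5 3 (by decide)
      rw [← hp45, h3c3, Finset.inter_self, Finset.inter_self] at hcc
      exact hne 4 hcc
    by_cases h3c6 : t 6 = t 4
    · exact main3 (fun i => t (![4,5,6,3,1,0,2] i)) (h.perm ![4,5,6,3,1,0,2] (by decide))
        hp45 (hp45.symm.trans h3c6.symm)
    · have hexD : ∀ j, j ≠ 4 → j ≠ 5 → t j ≠ t 4 := by
        intro j hja hjb
        fin_cases j
        · exact fun hh => (hexT 4 (by decide) (by decide)) hh.symm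
        · exact fun hh => (hexT 4 (by decide) (by decide)) (hh.symm.trans h01.symm)
        · exact h3c2
        · exact h3c3
        · simp at hja
        · simp at hjb
        · exact h3c6
      exact main_iia (fun i => t (![0,1,2,3,4,5,6] i)) (h.perm ![0,1,2,3,4,5,6] (by decide)) h01 hp45
        (exact_perm t ![0,1,2,3,4,5,6] 0 1 (by decide) hexT) (exact_perm t ![0,1,2,3,4,5,6] 4 5 (by decide) hexD)
  by_cases hp46 : t 4 = t 6
  ·
    by_cases h3c2 : t 2 = t 4
    · exact main3 (fun i => t (![4,6,2,1,0,3,5] i)) (h.perm ![4,6,2,1,0,3,5] (by decide))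
        hp46 (hp46.symm.trans h3c2.symm)
    by_cases h3c3 : t 3 = t 4
    · exact main3 (fun i => t (![4,6,3,1,5,2,0] i)) (h.perm ![4,6,3,1,5,2,0] (by decide))
        hp46 (hp46.symm.trans h3c3.symm)
    by_cases h3c5 : t 5 = t 4
    · exact main3 (fun i => t (![4,6,5,1,3,0,2] i)) (h.perm ![4,6,5,1,3,0,2] (by decide))
        hp46 (hp46.symm.trans h3c5.symm)
    · have hexD : ∀ j, j ≠ 4 → j ≠ 6 → t j ≠ t 4 := by
        intro j hja hjb
        fin_cases j
        · exact fun hh => (hexT 4 (by decide) (by decide)) hh.symm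
        · exact fun hh => (hexT 4 (by decide) (by decide)) (hh.symm.trans h01.symm)
        · exact h3c2
        · exact h3c3
        · simp at hja
        · exact h3c5
        · simp at hjb
      have hexT1 : ∀ j, j ≠ (1:Fin 7) → j ≠ 0 → t j ≠ t 1 := fun j u1 u0 hh => hexT j u0 u1 (hh.trans h01.symm)
      exact main_i (fun i => t (![4,6,2,1,0,3,5] i)) (h.perm ![4,6,2,1,0,3,5] (by decide)) hp46 h01.symm
        (exact_perm t ![4,6,2,1,0,3,5] 0 1 (by decide) hexD) (exact_perm t ![4,6,2,1,0,3,5] 3 4 (by decide) hexT1)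
  by_cases hp56 : t 5 = t 6
  ·
    by_cases h3c2 : t 2 = t 5
    · exact main3 (fun i => t (![5,6,2,0,1,3,4] i)) (h.perm ![5,6,2,0,1,3,4] (by decide))
        hp56 (hp56.symm.trans h3c2.symm)
    by_cases h3c3 : t 3 = t 5
    · exact main3 (fun i => t (![5,6,3,0,4,2,1] i)) (h.perm ![5,6,3,0,4,2,1] (by decide))
        hp56 (hp56.symm.trans h3c3.symm)
    by_cases h3c4 : t 4 = t 5
    · exact main3 (fun i => t (![5,6,4,0,3,1,2] i)) (h.perm ![5,6,4,0,3,1,2] (by decide))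
        hp56 (hp56.symm.trans h3c4.symm)
    · have hexD : ∀ j, j ≠ 5 → j ≠ 6 → t j ≠ t 5 := by
        intro j hja hjb
        fin_cases j
        · exact fun hh => (hexT 5 (by decide) (by decide)) hh.symm
        · exact fun hh => (hexT 5 (by decide) (by decide)) (hh.symm.trans h01.symm)
        · exact h3c2
        · exact h3c3
        · exact h3c4
        · simp at hja
        · simp at hjb
      exact main_i (fun i => t (![5,6,2,0,1,3,4] i)) (h.perm ![5,6,2,0,1,3,4] (by decide)) hp56 h01
        (exact_perm t ![5,6,2,0,1,3,4] 0 1 (by decide) hexD) (exact_perm t ![5,6,2,0,1,3,4] 3 4 (by decide) hexT)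
  · have i124 := hcond 0 2 4 (by decide)
    have i125 : t 0 ∩ t 2 ∩ t 5 = ∅ := by
      have hh := hcond 1 2 5 (by decide); rwa [← h01] at hh
    have i146 : t 0 ∩ t 4 ∩ t 6 = ∅ := by
      have hh := hcond 1 4 6 (by decide); rwa [← h01] at hh
    have i156 := hcond 0 5 6 (by decide)
    have i236 := hcond 2 3 6 (by decide)
    have i345 := hcond 3 4 5 (by decide)
    exact conf2 (hmns 0) (hmns 2) (hmns 3) (hmns 4) (hmns 5) (hmns 6)
      (Ne.symm (hexT 2 (by decide) (by decide))) (Ne.symm (hexT 3 (by decide) (by decide))) (Ne.symm (hexT 4 (by decide) (by decide))) (Ne.symm (hexT 5 (by decide) (by decide))) (Ne.symm (hexT 6 (by decide) (by decide)))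
      hp23 hp24 hp25 hp26 hp34 hp35 hp36 hp45 hp46 hp56
      d03 i124 i125 i146 i156 i236 i345

lemma keyLemma (t : Fin 7 → Finset (Fin m)) (h : Hyp m K t) : CondS3 m K := by
  obtain ⟨hmns, hne, hcond⟩ := id h
  by_cases hinj : ∀ (a b : Fin 7), a ≠ b → t a ≠ t b
  · exact conf1 (hmns 0) (hmns 1) (hmns 2) (hmns 3) (hmns 4) (hmns 5) (hmns 6)
      (hinj 0 1 (by decide)) (hinj 0 2 (by decide)) (hinj 0 3 (by decide)) (hinj 0 4 (by decide)) (hinj 0 5 (by decide)) (hinj 0 6 (by decide)) (hinj 1 2 (by decide)) (hinj 1 3 (by decide)) (hinj 1 4 (by decide)) (hinj 1 5 (by decide)) (hinj 1 6 (by decide)) (hinj 2 3 (by decide)) (hinj 2 4 (by decide)) (hinj 2 5 (by decide)) (hinj 2 6 (by decide)) (hinj 3 4 (by decide)) (hinj 3 5 (by decide)) (hinj 3 6 (by decide)) (hinj 4 5 (by decide)) (hinj 4 6 (by decide)) (hinj 5 6 (by decide))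
      (hcond 0 1 3 (by decide)) (hcond 0 2 4 (by decide)) (hcond 0 5 6 (by decide)) (hcond 1 2 5 (by decide)) (hcond 1 4 6 (by decide)) (hcond 2 3 6 (by decide)) (hcond 3 4 5 (by decide))
  · push_neg at hinj
    obtain ⟨a, b, hab, heq⟩ := hinj
    fin_cases a <;> fin_cases b
    · exact absurd rfl hab
    · exact main2 (fun i => t (![0,1,2,3,4,5,6] i)) (h.perm ![0,1,2,3,4,5,6] (by decide)) heq
    · exact main2 (fun i => t (![0,2,1,4,3,5,6] i)) (h.perm ![0,2,1,4,3,5,6] (by decide)) heq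
    · exact main2 (fun i => t (![0,3,2,1,4,6,5] i)) (h.perm ![0,3,2,1,4,6,5] (by decide)) heq
    · exact main2 (fun i => t (![0,4,1,2,3,6,5] i)) (h.perm ![0,4,1,2,3,6,5] (by decide)) heq
    · exact main2 (fun i => t (![0,5,1,6,3,2,4] i)) (h.perm ![0,5,1,6,3,2,4] (by decide)) heq
    · exact main2 (fun i => t (![0,6,1,5,3,4,2] i)) (h.perm ![0,6,1,5,3,4,2] (by decide)) heq
    · exact main2 (fun i => t (![1,0,2,3,5,4,6] i)) (h.perm ![1,0,2,3,5,4,6] (by decide)) heq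
    · exact absurd rfl hab
    · exact main2 (fun i => t (![1,2,0,5,3,4,6] i)) (h.perm ![1,2,0,5,3,4,6] (by decide)) heq
    · exact main2 (fun i => t (![1,3,2,0,5,6,4] i)) (h.perm ![1,3,2,0,5,6,4] (by decide)) heq
    · exact main2 (fun i => t (![1,4,0,6,3,2,5] i)) (h.perm ![1,4,0,6,3,2,5] (by decide)) heq
    · exact main2 (fun i => t (![1,5,0,2,3,6,4] i)) (h.perm ![1,5,0,2,3,6,4] (by decide)) heq
    · exact main2 (fun i => t (![1,6,0,4,3,5,2] i)) (h.perm ![1,6,0,4,3,5,2] (by decide)) heq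
    · exact main2 (fun i => t (![2,0,1,4,5,3,6] i)) (h.perm ![2,0,1,4,5,3,6] (by decide)) heq
    · exact main2 (fun i => t (![2,1,0,5,4,3,6] i)) (h.perm ![2,1,0,5,4,3,6] (by decide)) heq
    · exact absurd rfl hab
    · exact main2 (fun i => t (![2,3,0,6,4,1,5] i)) (h.perm ![2,3,0,6,4,1,5] (by decide)) heq
    · exact main2 (fun i => t (![2,4,1,0,5,6,3] i)) (h.perm ![2,4,1,0,5,6,3] (by decide)) heq
    · exact main2 (fun i => t (![2,5,0,1,4,6,3] i)) (h.perm ![2,5,0,1,4,6,3] (by decide)) heq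
    · exact main2 (fun i => t (![2,6,0,3,4,5,1] i)) (h.perm ![2,6,0,3,4,5,1] (by decide)) heq
    · exact main2 (fun i => t (![3,0,2,1,6,4,5] i)) (h.perm ![3,0,2,1,6,4,5] (by decide)) heq
    · exact main2 (fun i => t (![3,1,2,0,6,5,4] i)) (h.perm ![3,1,2,0,6,5,4] (by decide)) heq
    · exact main2 (fun i => t (![3,2,0,6,1,4,5] i)) (h.perm ![3,2,0,6,1,4,5] (by decide)) heq
    · exact absurd rfl hab
    · exact main2 (fun i => t (![3,4,0,5,1,2,6] i)) (h.perm ![3,4,0,5,1,2,6] (by decide)) heq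
    · exact main2 (fun i => t (![3,5,0,4,1,6,2] i)) (h.perm ![3,5,0,4,1,6,2] (by decide)) heq
    · exact main2 (fun i => t (![3,6,0,2,1,5,4] i)) (h.perm ![3,6,0,2,1,5,4] (by decide)) heq
    · exact main2 (fun i => t (![4,0,1,2,6,3,5] i)) (h.perm ![4,0,1,2,6,3,5] (by decide)) heq
    · exact main2 (fun i => t (![4,1,0,6,2,3,5] i)) (h.perm ![4,1,0,6,2,3,5] (by decide)) heq
    · exact main2 (fun i => t (![4,2,1,0,6,5,3] i)) (h.perm ![4,2,1,0,6,5,3] (by decide)) heq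
    · exact main2 (fun i => t (![4,3,0,5,2,1,6] i)) (h.perm ![4,3,0,5,2,1,6] (by decide)) heq
    · exact absurd rfl hab
    · exact main2 (fun i => t (![4,5,0,3,2,6,1] i)) (h.perm ![4,5,0,3,2,6,1] (by decide)) heq
    · exact main2 (fun i => t (![4,6,0,1,2,5,3] i)) (h.perm ![4,6,0,1,2,5,3] (by decide)) heq
    · exact main2 (fun i => t (![5,0,1,6,2,3,4] i)) (h.perm ![5,0,1,6,2,3,4] (by decide)) heq
    · exact main2 (fun i => t (![5,1,0,2,6,3,4] i)) (h.perm ![5,1,0,2,6,3,4] (by decide)) heq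
    · exact main2 (fun i => t (![5,2,0,1,6,4,3] i)) (h.perm ![5,2,0,1,6,4,3] (by decide)) heq
    · exact main2 (fun i => t (![5,3,0,4,6,1,2] i)) (h.perm ![5,3,0,4,6,1,2] (by decide)) heq
    · exact main2 (fun i => t (![5,4,0,3,6,2,1] i)) (h.perm ![5,4,0,3,6,2,1] (by decide)) heq
    · exact absurd rfl hab
    · exact main2 (fun i => t (![5,6,1,0,2,4,3] i)) (h.perm ![5,6,1,0,2,4,3] (by decide)) heq
    · exact main2 (fun i => t (![6,0,1,5,4,3,2] i)) (h.perm ![6,0,1,5,4,3,2] (by decide)) heq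
    · exact main2 (fun i => t (![6,1,0,4,5,3,2] i)) (h.perm ![6,1,0,4,5,3,2] (by decide)) heq
    · exact main2 (fun i => t (![6,2,0,3,5,4,1] i)) (h.perm ![6,2,0,3,5,4,1] (by decide)) heq
    · exact main2 (fun i => t (![6,3,0,2,5,1,4] i)) (h.perm ![6,3,0,2,5,1,4] (by decide)) heq
    · exact main2 (fun i => t (![6,4,0,1,5,2,3] i)) (h.perm ![6,4,0,1,5,2,3] (by decide)) heq
    · exact main2 (fun i => t (![6,5,1,0,4,2,3] i)) (h.perm ![6,5,1,0,4,2,3] (by decide)) heq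
    · exact absurd rfl hab

end Main

lemma A2_to_t (m : ℕ) (K : Set (Finset (Fin m))) (hK : IsSimplicialComplex m K)
    (S : Matrix (Fin m) (Fin 3) (ZMod 2)) (hA2 : CondA2 m 3 K S) :
    ∃ t : Fin 7 → Finset (Fin m), Hyp m K t := by
  classical
  set σ' : Fin 7 → Finset (Fin m) :=
    fun f => Finset.univ.filter (fun i => dp (S i) (lv f) = 1) with hσ'
  have hz : ∀ x : ZMod 2, x ≠ 1 → x = 0 := by decide
  have hns : ∀ f, σ' f ∉ K := by
    intro f hin
    have hsp := hA2 (σ' f) hin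
    have hker : ∀ x ∈ Submodule.span (ZMod 2) ((fun i => S i) '' {i : Fin m | i ∉ σ' f}),
        dp x (lv f) = 0 := by
      intro x hx
      induction hx using Submodule.span_induction with
      | mem x hx =>
        obtain ⟨i, hi, rfl⟩ := hx
        apply hz
        intro h1
        exact hi (by simp [hσ', h1])
      | zero => simp [dp]
      | add x y _ _ h1 h2 =>
        have hd : dp (x + y) (lv f) = dp x (lv f) + dp y (lv f) := by
          simp only [dp, Pi.add_apply]; ring
        rw [hd, h1, h2, add_zero]
      | smul a x _ h1 =>
        have hd : dp (a • x) (lv f) = a * dp x (lv f) := by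
          simp only [dp, Pi.smul_apply, smul_eq_mul]; ring
        rw [hd, h1, mul_zero]
    have hj : ∀ j : Fin 3, lv f j = 0 := by
      intro j
      have hmem : (fun i : Fin 3 => if j = i then (1:ZMod 2) else 0) ∈
          Submodule.span (ZMod 2) ((fun i => S i) '' {i : Fin m | i ∉ σ' f}) := by
        rw [hsp]; trivial
      have hh := hker _ hmem
      fin_cases j <;> simpa [dp] using hh
    exact lv_ne f (funext hj)
  have hline : ∀ a b c : Fin 7, lv a + lv b + lv c = 0 → σ' a ∩ σ' b ∩ σ' c = ∅ := by
    intro a b c hsum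
    rw [Finset.eq_empty_iff_forall_notMem]
    intro i hi
    simp only [hσ', Finset.mem_inter, Finset.mem_filter, Finset.mem_univ, true_and] at hi
    obtain ⟨⟨ha, hb⟩, hc⟩ := hi
    have h3 : dp (S i) (lv a) + dp (S i) (lv b) + dp (S i) (lv c)
        = dp (S i) (lv a + lv b + lv c) := by simp only [dp, Pi.add_apply]; ring
    rw [ha, hb, hc, hsum] at h3
    have hz0 : dp (S i) 0 = 0 := by simp [dp]
    rw [hz0] at h3
    exact absurd h3 (by decide)
  have hmin : ∀ f, ∃ τ, τ ⊆ σ' f ∧ MinimalNonSimplex m K τ := fun f =>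
    exists_min m K _ (hns f)
  choose t hsub hmns using hmin
  refine ⟨t, hmns, ?_, ?_⟩
  · intro f h0
    have hx := (hmns f).1
    rw [h0] at hx
    exact hx hK.1
  · intro a b c hsum
    have hh := hline a b c hsum
    rw [← Finset.subset_empty, ← hh]
    exact Finset.inter_subset_inter (Finset.inter_subset_inter (hsub a) (hsub b)) (hsub c)

lemma N3_to_A2 (m : ℕ) (K : Set (Finset (Fin m))) (hK : IsSimplicialComplex m K)
    (σ : Fin 7 → Finset (Fin m)) (hns : ∀ f, σ f ∉ K)
    (e1 : σ 0 ∩ σ 1 ∩ σ 3 = ∅) (e2 : σ 0 ∩ σ 2 ∩ σ 4 = ∅) (e3 : σ 0 ∩ σ 5 ∩ σ 6 = ∅)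
    (e4 : σ 1 ∩ σ 2 ∩ σ 5 = ∅) (e5 : σ 1 ∩ σ 4 ∩ σ 6 = ∅) (e6 : σ 2 ∩ σ 3 ∩ σ 6 = ∅)
    (e7 : σ 3 ∩ σ 4 ∩ σ 5 = ∅) :
    ∃ S : Matrix (Fin m) (Fin 3) (ZMod 2), CondA2 m 3 K S := by
  classical
  set A : Fin m → Finset (Fin 7) := fun i => Finset.univ.filter (fun f => i ∈ σ f) with hA
  have hlf : ∀ i : Fin m, ∀ (a b c : Fin 7), σ a ∩ σ b ∩ σ c = ∅ →
      ¬({a, b, c} : Finset (Fin 7)) ⊆ A i := by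
    intro i a b c he hsub
    have ha : i ∈ σ a := by
      have hh := hsub (by simp : a ∈ ({a,b,c} : Finset (Fin 7)))
      simpa [hA] using hh
    have hb : i ∈ σ b := by
      have hh := hsub (by simp : b ∈ ({a,b,c} : Finset (Fin 7)))
      simpa [hA] using hh
    have hc : i ∈ σ c := by
      have hh := hsub (by simp : c ∈ ({a,b,c} : Finset (Fin 7)))
      simpa [hA] using hh
    have hm : i ∈ σ a ∩ σ b ∩ σ c := by simp [Finset.mem_inter, ha, hb, hc]
    rw [he] at hm
    exact absurd hm (Finset.notMem_empty i)
  have hov : ∀ i : Fin m, ∃ v : Fin 3 → ZMod 2, ∀ f ∈ A i, dp (lv f) v = 1 := fun i =>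
    hyperoval (A i) (hlf i 0 1 3 e1) (hlf i 0 2 4 e2) (hlf i 0 5 6 e3)
      (hlf i 1 2 5 e4) (hlf i 1 4 6 e5) (hlf i 2 3 6 e6) (hlf i 3 4 5 e7)
  choose S hS using hov
  refine ⟨Matrix.of S, ?_⟩
  intro τ hτ
  apply span_top
  intro v hv
  obtain ⟨f, hf⟩ := lv_surj v hv
  have hnsub : ¬ σ f ⊆ τ := fun hsub => hns f (hK.2 τ hτ (σ f) hsub)
  obtain ⟨i, hi, hi'⟩ := Finset.not_subset.mp hnsub
  refine ⟨S i, ⟨i, hi', rfl⟩, ?_⟩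
  have hfA : f ∈ A i := by simp [hA, hi]
  rw [← hf, dp_comm, hS i f hfA]
  exact one_ne_zero

lemma S3_to_A2 (m : ℕ) (K : Set (Finset (Fin m))) (hK : IsSimplicialComplex m K)
    (hS3 : CondS3 m K) : ∃ S : Matrix (Fin m) (Fin 3) (ZMod 2), CondA2 m 3 K S := by
  rcases hS3 with ⟨g1,g2,g3,g4,g5,g6,g7,hm,_,k1,k2,k3,k4,k5,k6,k7⟩ |
    ⟨g1,g2,g3,g4,g5,g6,hm,_,k1,k2,k3,k4,k5,k6,k7⟩ |
    ⟨g1,g2,g3,g4,g5,hm,_,k1,k2,k3,k4,k5⟩ |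
    ⟨g1,g2,g3,g4,hm,_,k1,k2⟩ |
    ⟨g1,g2,g3,hm,_,k1,k2,k3⟩
  · simp only [List.mem_cons, List.not_mem_nil, or_false] at hm
    refine N3_to_A2 m K hK ![g1, g2, g3, g4, g5, g6, g7] ?_ ?_ ?_ ?_ ?_ ?_ ?_ ?_
    · intro f
      fin_cases f
      · exact fun hin => (hm g1 (by tauto)).1 hin
      · exact fun hin => (hm g2 (by tauto)).1 hin
      · exact fun hin => (hm g3 (by tauto)).1 hin
      · exact fun hin => (hm g4 (by tauto)).1 hin
      · exact fun hin => (hm g5 (by tauto)).1 hin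
      · exact fun hin => (hm g6 (by tauto)).1 hin
      · exact fun hin => (hm g7 (by tauto)).1 hin
    · show g1 ∩ g2 ∩ g4 = ∅
      rw [← Finset.subset_empty, ← k1]
      all_goals intro x hx
      all_goals simp only [Finset.mem_inter, Finset.mem_union] at hx ⊢
      all_goals tauto
    · show g1 ∩ g3 ∩ g5 = ∅
      rw [← Finset.subset_empty, ← k2]
      all_goals intro x hx
      all_goals simp only [Finset.mem_inter, Finset.mem_union] at hx ⊢
      all_goals tauto
    · show g1 ∩ g6 ∩ g7 = ∅
      rw [← Finset.subset_empty, ← k3]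
      all_goals intro x hx
      all_goals simp only [Finset.mem_inter, Finset.mem_union] at hx ⊢
      all_goals tauto
    · show g2 ∩ g3 ∩ g6 = ∅
      rw [← Finset.subset_empty, ← k4]
      all_goals intro x hx
      all_goals simp only [Finset.mem_inter, Finset.mem_union] at hx ⊢
      all_goals tauto
    · show g2 ∩ g5 ∩ g7 = ∅
      rw [← Finset.subset_empty, ← k5]
      all_goals intro x hx
      all_goals simp only [Finset.mem_inter, Finset.mem_union] at hx ⊢
      all_goals tauto
    · show g3 ∩ g4 ∩ g7 = ∅
      rw [← Finset.subset_empty, ← k6]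
      all_goals intro x hx
      all_goals simp only [Finset.mem_inter, Finset.mem_union] at hx ⊢
      all_goals tauto
    · show g4 ∩ g5 ∩ g6 = ∅
      rw [← Finset.subset_empty, ← k7]
      all_goals intro x hx
      all_goals simp only [Finset.mem_inter, Finset.mem_union] at hx ⊢
      all_goals tauto
  · simp only [List.mem_cons, List.not_mem_nil, or_false] at hm
    refine N3_to_A2 m K hK ![g1, g1, g2, g3, g4, g5, g6] ?_ ?_ ?_ ?_ ?_ ?_ ?_ ?_
    · intro f
      fin_cases f
      · exact fun hin => (hm g1 (by tauto)).1 hin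
      · exact fun hin => (hm g1 (by tauto)).1 hin
      · exact fun hin => (hm g2 (by tauto)).1 hin
      · exact fun hin => (hm g3 (by tauto)).1 hin
      · exact fun hin => (hm g4 (by tauto)).1 hin
      · exact fun hin => (hm g5 (by tauto)).1 hin
      · exact fun hin => (hm g6 (by tauto)).1 hin
    · show g1 ∩ g1 ∩ g3 = ∅
      rw [← Finset.subset_empty, ← k1]
      all_goals intro x hx
      all_goals simp only [Finset.mem_inter, Finset.mem_union] at hx ⊢
      all_goals tauto
    · show g1 ∩ g2 ∩ g4 = ∅
      rw [← Finset.subset_empty, ← k2]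
      all_goals intro x hx
      all_goals simp only [Finset.mem_inter, Finset.mem_union] at hx ⊢
      all_goals tauto
    · show g1 ∩ g5 ∩ g6 = ∅
      rw [← Finset.subset_empty, ← k5]
      all_goals intro x hx
      all_goals simp only [Finset.mem_inter, Finset.mem_union] at hx ⊢
      all_goals tauto
    · show g1 ∩ g2 ∩ g5 = ∅
      rw [← Finset.subset_empty, ← k3]
      all_goals intro x hx
      all_goals simp only [Finset.mem_inter, Finset.mem_union] at hx ⊢
      all_goals tauto
    · show g1 ∩ g4 ∩ g6 = ∅
      rw [← Finset.subset_empty, ← k4]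
      all_goals intro x hx
      all_goals simp only [Finset.mem_inter, Finset.mem_union] at hx ⊢
      all_goals tauto
    · show g2 ∩ g3 ∩ g6 = ∅
      rw [← Finset.subset_empty, ← k6]
      all_goals intro x hx
      all_goals simp only [Finset.mem_inter, Finset.mem_union] at hx ⊢
      all_goals tauto
    · show g3 ∩ g4 ∩ g5 = ∅
      rw [← Finset.subset_empty, ← k7]
      all_goals intro x hx
      all_goals simp only [Finset.mem_inter, Finset.mem_union] at hx ⊢
      all_goals tauto
  · simp only [List.mem_cons, List.not_mem_nil, or_false] at hm
    refine N3_to_A2 m K hK ![g2, g2, g3, g1, g1, g5, g4] ?_ ?_ ?_ ?_ ?_ ?_ ?_ ?_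
    · intro f
      fin_cases f
      · exact fun hin => (hm g2 (by tauto)).1 hin
      · exact fun hin => (hm g2 (by tauto)).1 hin
      · exact fun hin => (hm g3 (by tauto)).1 hin
      · exact fun hin => (hm g1 (by tauto)).1 hin
      · exact fun hin => (hm g1 (by tauto)).1 hin
      · exact fun hin => (hm g5 (by tauto)).1 hin
      · exact fun hin => (hm g4 (by tauto)).1 hin
    · show g2 ∩ g2 ∩ g1 = ∅
      rw [← Finset.subset_empty, ← k1]
      all_goals intro x hx
      all_goals simp only [Finset.mem_inter, Finset.mem_union] at hx ⊢
      all_goals tauto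
    · show g2 ∩ g3 ∩ g1 = ∅
      rw [← Finset.subset_empty, ← k1]
      all_goals intro x hx
      all_goals simp only [Finset.mem_inter, Finset.mem_union] at hx ⊢
      all_goals tauto
    · show g2 ∩ g5 ∩ g4 = ∅
      rw [← Finset.subset_empty, ← k5]
      all_goals intro x hx
      all_goals simp only [Finset.mem_inter, Finset.mem_union] at hx ⊢
      all_goals tauto
    · show g2 ∩ g3 ∩ g5 = ∅
      rw [← Finset.subset_empty, ← k4]
      all_goals intro x hx
      all_goals simp only [Finset.mem_inter, Finset.mem_union] at hx ⊢
      all_goals tauto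
    · show g2 ∩ g1 ∩ g4 = ∅
      rw [← Finset.subset_empty, ← k1]
      all_goals intro x hx
      all_goals simp only [Finset.mem_inter, Finset.mem_union] at hx ⊢
      all_goals tauto
    · show g3 ∩ g1 ∩ g4 = ∅
      rw [← Finset.subset_empty, ← k3]
      all_goals intro x hx
      all_goals simp only [Finset.mem_inter, Finset.mem_union] at hx ⊢
      all_goals tauto
    · show g1 ∩ g1 ∩ g5 = ∅
      rw [← Finset.subset_empty, ← k2]
      all_goals intro x hx
      all_goals simp only [Finset.mem_inter, Finset.mem_union] at hx ⊢
      all_goals tauto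
  · simp only [List.mem_cons, List.not_mem_nil, or_false] at hm
    refine N3_to_A2 m K hK ![g2, g3, g1, g4, g1, g1, g1] ?_ ?_ ?_ ?_ ?_ ?_ ?_ ?_
    · intro f
      fin_cases f
      · exact fun hin => (hm g2 (by tauto)).1 hin
      · exact fun hin => (hm g3 (by tauto)).1 hin
      · exact fun hin => (hm g1 (by tauto)).1 hin
      · exact fun hin => (hm g4 (by tauto)).1 hin
      · exact fun hin => (hm g1 (by tauto)).1 hin
      · exact fun hin => (hm g1 (by tauto)).1 hin
      · exact fun hin => (hm g1 (by tauto)).1 hin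
    · show g2 ∩ g3 ∩ g4 = ∅
      rw [← Finset.subset_empty, ← k2]
      all_goals intro x hx
      all_goals simp only [Finset.mem_inter, Finset.mem_union] at hx ⊢
      all_goals tauto
    · show g2 ∩ g1 ∩ g1 = ∅
      rw [← Finset.subset_empty, ← k1]
      all_goals intro x hx
      all_goals simp only [Finset.mem_inter, Finset.mem_union] at hx ⊢
      all_goals tauto
    · show g2 ∩ g1 ∩ g1 = ∅
      rw [← Finset.subset_empty, ← k1]
      all_goals intro x hx
      all_goals simp only [Finset.mem_inter, Finset.mem_union] at hx ⊢
      all_goals tauto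
    · show g3 ∩ g1 ∩ g1 = ∅
      rw [← Finset.subset_empty, ← k1]
      all_goals intro x hx
      all_goals simp only [Finset.mem_inter, Finset.mem_union] at hx ⊢
      all_goals tauto
    · show g3 ∩ g1 ∩ g1 = ∅
      rw [← Finset.subset_empty, ← k1]
      all_goals intro x hx
      all_goals simp only [Finset.mem_inter, Finset.mem_union] at hx ⊢
      all_goals tauto
    · show g1 ∩ g4 ∩ g1 = ∅
      rw [← Finset.subset_empty, ← k1]
      all_goals intro x hx
      all_goals simp only [Finset.mem_inter, Finset.mem_union] at hx ⊢
      all_goals tauto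
    · show g4 ∩ g1 ∩ g1 = ∅
      rw [← Finset.subset_empty, ← k1]
      all_goals intro x hx
      all_goals simp only [Finset.mem_inter, Finset.mem_union] at hx ⊢
      all_goals tauto
  · simp only [List.mem_cons, List.not_mem_nil, or_false] at hm
    refine N3_to_A2 m K hK ![g1, g1, g2, g2, g3, g3, g3] ?_ ?_ ?_ ?_ ?_ ?_ ?_ ?_
    · intro f
      fin_cases f
      · exact fun hin => (hm g1 (by tauto)).1 hin
      · exact fun hin => (hm g1 (by tauto)).1 hin
      · exact fun hin => (hm g2 (by tauto)).1 hin
      · exact fun hin => (hm g2 (by tauto)).1 hin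
      · exact fun hin => (hm g3 (by tauto)).1 hin
      · exact fun hin => (hm g3 (by tauto)).1 hin
      · exact fun hin => (hm g3 (by tauto)).1 hin
    · show g1 ∩ g1 ∩ g2 = ∅
      rw [← Finset.subset_empty, ← k1]
      all_goals intro x hx
      all_goals simp only [Finset.mem_inter, Finset.mem_union] at hx ⊢
      all_goals tauto
    · show g1 ∩ g2 ∩ g3 = ∅
      rw [← Finset.subset_empty, ← k1]
      all_goals intro x hx
      all_goals simp only [Finset.mem_inter, Finset.mem_union] at hx ⊢
      all_goals tauto
    · show g1 ∩ g3 ∩ g3 = ∅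
      rw [← Finset.subset_empty, ← k2]
      all_goals intro x hx
      all_goals simp only [Finset.mem_inter, Finset.mem_union] at hx ⊢
      all_goals tauto
    · show g1 ∩ g2 ∩ g3 = ∅
      rw [← Finset.subset_empty, ← k1]
      all_goals intro x hx
      all_goals simp only [Finset.mem_inter, Finset.mem_union] at hx ⊢
      all_goals tauto
    · show g1 ∩ g3 ∩ g3 = ∅
      rw [← Finset.subset_empty, ← k2]
      all_goals intro x hx
      all_goals simp only [Finset.mem_inter, Finset.mem_union] at hx ⊢
      all_goals tauto
    · show g2 ∩ g2 ∩ g3 = ∅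
      rw [← Finset.subset_empty, ← k3]
      all_goals intro x hx
      all_goals simp only [Finset.mem_inter, Finset.mem_union] at hx ⊢
      all_goals tauto
    · show g2 ∩ g3 ∩ g3 = ∅
      rw [← Finset.subset_empty, ← k3]
      all_goals intro x hx
      all_goals simp only [Finset.mem_inter, Finset.mem_union] at hx ⊢
      all_goals tauto

/-- `s_ℝ(K) ≥ 3` iff condition (S3) holds. -/
theorem stmt_12 (m : ℕ) (K : Set (Finset (Fin m))) (hK : IsSimplicialComplex m K) :
    (∃ S : Matrix (Fin m) (Fin 3) (ZMod 2), CondA2 m 3 K S) ↔ CondS3 m K := by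
  constructor
  · rintro ⟨S, hA2⟩
    obtain ⟨t, ht⟩ := A2_to_t m K hK S hA2
    exact keyLemma t ht
  · exact S3_to_A2 m K hK
end
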